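/- arXiv:2601.19615 — 2 statements merged into one kernel-verified Lean document; each statement's English description precedes it below -/
import Mathlib

section
/- For every extreme-supported non-dominated point y of the bi-objective minimum weight basis problem on M, there exists λ ∈ 𝓔 ∪ {0} such that y = f(B_M(S^↑_λ)), i.e., y is the image of the greedy basis for the ordering S^↑_λ. -/
open Set

noncomputable section

/-- The weighted cost `c_λ(e) = λ·c₁(e) + (1−λ)·c₂(e)`. -/
def clam {α : Type*} (c₁ c₂ : α → ℝ) (lam : ℝ) (e : α) : ℝ :=
  lam * c₁ e + (1 - lam) * c₂ e

/-- The set `𝓟` of pairs `(e,f)` with `c₁(e) > c₁(f)` and `c₂(e) < c₂(f)`. -/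
def Pset {α : Type*} (c₁ c₂ : α → ℝ) : Set (α × α) :=
  {p | c₁ p.2 < c₁ p.1 ∧ c₂ p.1 < c₂ p.2}

/-- The set `𝓔 = {λ(e,f) : (e,f) ∈ 𝓟}` of intersection values: for `(e,f) ∈ 𝓟`, `λ(e,f)` is
the unique `t ∈ (0,1)` with `c_t(e) = c_t(f)`. -/
def crossSet {α : Type*} (c₁ c₂ : α → ℝ) : Set ℝ :=
  {t | t ∈ Set.Ioo (0 : ℝ) 1 ∧
    ∃ p ∈ Pset c₁ c₂, clam c₁ c₂ t p.1 = clam c₁ c₂ t p.2}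

/-- `e` strictly precedes `f` in the ordering `S^↑_λ`, i.e. in the non-descending
lexicographic order by the key `(c_λ(e), c₁(e))` with remaining ties broken by the fixed
linear order on the ground set. -/
def precUp {α : Type*} [LinearOrder α] (c₁ c₂ : α → ℝ) (lam : ℝ) (e f : α) : Prop :=
  clam c₁ c₂ lam e < clam c₁ c₂ lam f ∨
    (clam c₁ c₂ lam e = clam c₁ c₂ lam f ∧
      (c₁ e < c₁ f ∨ (c₁ e = c₁ f ∧ e < f)))

/-- `e` strictly precedes `f` in the ordering `S^↓_λ`, i.e. in the non-descending
lexicographic order by the key `(c_λ(e), −c₁(e))` with remaining ties broken by the fixed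
linear order on the ground set. -/
def precDown {α : Type*} [LinearOrder α] (c₁ c₂ : α → ℝ) (lam : ℝ) (e f : α) : Prop :=
  clam c₁ c₂ lam e < clam c₁ c₂ lam f ∨
    (clam c₁ c₂ lam e = clam c₁ c₂ lam f ∧
      (c₁ f < c₁ e ∨ (c₁ e = c₁ f ∧ e < f)))

open Classical in
/-- One step of the greedy algorithm: add `e` to the current set `I` if this keeps it
independent in `M`. -/
def greedyStep {α : Type*} (M : Matroid α) (I : Set α) (e : α) : Set α :=
  if M.Indep (insert e I) then insert e I else I

/-- The greedy basis `B_M(𝓢)`: scan the list `𝓢` in order, starting from `∅`, adding each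
element whose addition keeps the current set independent in `M`. -/
def greedy {α : Type*} (M : Matroid α) (S : List α) : Set α :=
  S.foldl (greedyStep M) ∅

/-- The total cost `f_i(B) = Σ_{e∈B} c_i(e)` of a set of elements. -/
def setCost {α : Type*} (c : α → ℝ) (B : Set α) : ℝ := ∑ᶠ e ∈ B, c e

/-- The image `f(B) = (f₁(B), f₂(B))` of a basis. -/
def fvec {α : Type*} (c₁ c₂ : α → ℝ) (B : Set α) : ℝ × ℝ :=
  (setCost c₁ B, setCost c₂ B)

/-- `B` is a `λ`-optimal basis of `M`: a basis minimizing `Σ_{e∈B} c_λ(e)` among all bases. -/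
def OptBasis {α : Type*} (M : Matroid α) (c₁ c₂ : α → ℝ) (lam : ℝ) (B : Set α) : Prop :=
  M.IsBase B ∧ ∀ B' : Set α, M.IsBase B' →
    setCost (clam c₁ c₂ lam) B ≤ setCost (clam c₁ c₂ lam) B'

/-- `B` is a supported efficient basis: `λ`-optimal for some `λ ∈ (0,1)`. -/
def SuppEffBasis {α : Type*} (M : Matroid α) (c₁ c₂ : α → ℝ) (B : Set α) : Prop :=
  ∃ lam ∈ Set.Ioo (0 : ℝ) 1, OptBasis M c₁ c₂ lam B

open Pointwise in
/-- `y` is an extreme-supported non-dominated point of the bi-objective minimum weight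
basis problem: `y = f(B)` for some supported efficient basis `B`, and `y` is an extreme
point of `conv({f(B') : B' basis of M}) + ℝ²_{≥0}`. -/
def ESNBasisPoint {α : Type*} (M : Matroid α) (c₁ c₂ : α → ℝ) (y : ℝ × ℝ) : Prop :=
  (∃ B : Set α, SuppEffBasis M c₁ c₂ B ∧ fvec c₁ c₂ B = y) ∧
    y ∈ Set.extremePoints ℝ
      (convexHull ℝ {y' : ℝ × ℝ | ∃ B : Set α, M.IsBase B ∧ fvec c₁ c₂ B = y'} +
        {p : ℝ × ℝ | 0 ≤ p.1 ∧ 0 ≤ p.2})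

/-- `L` is the enumeration `S^↑_λ` of the set `G`: it enumerates `G` without repetition,
sorted non-descendingly by the lexicographic key `(c_λ(e), c₁(e))` with remaining ties
broken by the fixed linear order. -/
def IsUpList {α : Type*} [LinearOrder α] (c₁ c₂ : α → ℝ) (lam : ℝ)
    (G : Set α) (L : List α) : Prop :=
  L.Nodup ∧ (∀ e : α, e ∈ L ↔ e ∈ G) ∧ L.Pairwise (precUp c₁ c₂ lam)

section GreedyFacts

open Classical

variable {α : Type*} (M : Matroid α)

lemma subset_greedyStep (I : Set α) (e : α) : I ⊆ greedyStep M I e := by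
  unfold greedyStep; split_ifs
  · exact Set.subset_insert _ _
  · exact subset_rfl

lemma greedyStep_subset (I : Set α) (e : α) : greedyStep M I e ⊆ insert e I := by
  unfold greedyStep; split_ifs
  · exact subset_rfl
  · exact Set.subset_insert _ _

lemma indep_greedyStep {I : Set α} (hI : M.Indep I) (e : α) : M.Indep (greedyStep M I e) := by
  unfold greedyStep; split_ifs with h
  · exact h
  · exact hI

lemma subset_foldl (L : List α) (I : Set α) : I ⊆ L.foldl (greedyStep M) I := by
  induction L generalizing I with
  | nil => simp
  | cons a L ih => exact (subset_greedyStep M I a).trans (ih _)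

lemma foldl_subset (L : List α) (I : Set α) :
    L.foldl (greedyStep M) I ⊆ I ∪ {e | e ∈ L} := by
  induction L generalizing I with
  | nil => simp
  | cons a L ih =>
    refine (ih _).trans ?_
    intro x hx
    rcases hx with h | h
    · rcases Set.mem_insert_iff.mp (greedyStep_subset M I a h) with rfl | h'
      · exact Or.inr (by simp)
      · exact Or.inl h'
    · exact Or.inr (by simp only [Set.mem_setOf_eq] at h ⊢; exact List.mem_cons_of_mem a h)

lemma indep_foldl (L : List α) {I : Set α} (hI : M.Indep I) :
    M.Indep (L.foldl (greedyStep M) I) := by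
  induction L generalizing I with
  | nil => simpa
  | cons a L ih => exact ih (indep_greedyStep M hI a)

lemma reject (L : List α) {I : Set α} (hI : M.Indep I) :
    ∀ e ∈ L, e ∉ L.foldl (greedyStep M) I → ¬ M.Indep (insert e (L.foldl (greedyStep M) I)) := by
  induction L generalizing I with
  | nil => simp
  | cons a L ih =>
    intro e he heG hind
    simp only [List.foldl_cons] at heG hind
    rcases List.mem_cons.mp he with rfl | heL
    · by_cases ha : e ∈ greedyStep M I e
      · exact heG (subset_foldl M L _ ha)
      · have h1 : greedyStep M I e = I ∧ ¬ M.Indep (insert e I) := by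
          unfold greedyStep at ha ⊢
          split_ifs at ha ⊢ with h
          · exact absurd (Set.mem_insert _ _) ha
          · exact ⟨rfl, h⟩
        have h2 : I ⊆ L.foldl (greedyStep M) (greedyStep M I e) := by
          rw [h1.1]; exact subset_foldl M L I
        exact h1.2 (hind.subset (Set.insert_subset_insert h2))
    · exact ih (indep_greedyStep M hI a) e heL heG hind

lemma greedy_base (L : List α) (hmem : ∀ e : α, e ∈ L) : M.IsBase (greedy M L) := by
  have hind : M.Indep (greedy M L) := indep_foldl M L M.empty_indep
  refine hind.isBase_of_maximal fun J hJ hGJ => ?_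
  by_contra hne
  obtain ⟨e, h1, h2⟩ := Set.exists_of_ssubset (hGJ.ssubset_of_ne hne)
  exact reject M L M.empty_indep e (hmem e) h2 (hJ.subset (Set.insert_subset h1 hGJ))

lemma greedy_take_subset (L : List α) (k : ℕ) :
    greedy M (L.take k) ⊆ {e | e ∈ L.take k} := by
  have := foldl_subset M (L.take k) ∅
  simpa [greedy] using this

lemma greedy_take_eq (L : List α) (hN : L.Nodup) (k : ℕ) :
    greedy M (L.take k) = greedy M L ∩ {e | e ∈ L.take k} := by
  have hsplit : greedy M L = (L.drop k).foldl (greedyStep M) (greedy M (L.take k)) := by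
    rw [greedy, greedy, ← List.foldl_append, List.take_append_drop]
  apply Set.Subset.antisymm
  · intro x hx
    exact ⟨hsplit ▸ subset_foldl M _ _ hx, greedy_take_subset M L k hx⟩
  · rintro x ⟨hxG, hxP⟩
    rw [hsplit] at hxG
    rcases foldl_subset M (L.drop k) _ hxG with h | h
    · exact h
    · exact absurd h (by
        intro hdrop
        exact List.disjoint_take_drop hN le_rfl hxP hdrop)

lemma ncard_le_of_maximal' [Fintype α] {I J X : Set α} (hI : M.Indep I) (hJ : M.Indep J)
    (hJX : J ⊆ X) (hmax : ∀ e ∈ X, e ∉ I → ¬ M.Indep (insert e I)) :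
    J.ncard ≤ I.ncard := by
  by_contra hlt
  push_neg at hlt
  have hlt' : I.encard < J.encard := by
    rw [← I.toFinite.cast_ncard_eq, ← J.toFinite.cast_ncard_eq]
    exact_mod_cast hlt
  obtain ⟨e, he, hins⟩ := hI.augment hJ hlt'
  exact hmax e (hJX he.1) he.2 hins

lemma prefix_count [Fintype α] (L : List α) (hN : L.Nodup) {B' : Set α}
    (hB' : M.Indep B') (k : ℕ) :
    (B' ∩ {e | e ∈ L.take k}).ncard ≤ (greedy M L ∩ {e | e ∈ L.take k}).ncard := by
  rw [← greedy_take_eq M L hN k]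
  refine ncard_le_of_maximal' M (indep_foldl M _ M.empty_indep)
    (hB'.subset Set.inter_subset_left) Set.inter_subset_right ?_
  intro e heX heI
  exact reject M (L.take k) M.empty_indep e heX heI

end GreedyFacts
section Abel

open Classical

variable {α : Type*}

lemma countP_eq_card_inter [DecidableEq α] {l : List α} (h : l.Nodup) (U : Finset α) :
    l.countP (fun e => decide (e ∈ U)) = (l.toFinset ∩ U).card := by
  induction l with
  | nil => simp
  | cons a l ih =>
    obtain ⟨hal, hnd⟩ := List.nodup_cons.mp h
    rw [List.countP_cons, ih hnd, List.toFinset_cons]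
    by_cases haU : a ∈ U
    · rw [Finset.insert_inter_of_mem haU,
        Finset.card_insert_of_notMem (fun hc => hal (List.mem_toFinset.mp (Finset.mem_inter.mp hc).1))]
      simp [haU]
    · rw [Finset.insert_inter_of_notMem haU]
      simp [haU]

lemma abel_key [DecidableEq α] (w : α → ℝ) :
    ∀ (l : List α), l.Nodup → l.Pairwise (fun e f => w e ≤ w f) →
      ∀ (S T : Finset α) (d : ℕ) (b : ℝ),
      (∀ e ∈ l, b ≤ w e) →
      (∀ e ∈ S, e ∈ l) → (∀ e ∈ T, e ∈ l) →
      (∀ k, (l.take k).countP (fun e => decide (e ∈ T)) ≤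
        (l.take k).countP (fun e => decide (e ∈ S)) + d) →
      S.card + d = T.card →
      (∑ e ∈ S, w e) + d * b ≤ ∑ e ∈ T, w e := by
  intro l
  induction l with
  | nil =>
    intro _ _ S T d b _ hS hT _ htot
    have hS0 : S = ∅ := Finset.eq_empty_of_forall_notMem (fun e he => by simpa using hS e he)
    have hT0 : T = ∅ := Finset.eq_empty_of_forall_notMem (fun e he => by simpa using hT e he)
    subst hS0; subst hT0
    simp only [Finset.card_empty] at htot
    obtain rfl : d = 0 := by omega
    simp
  | cons a l ih =>
    intro hnd hsort S T d b hb hS hT hcnt htot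
    obtain ⟨hal, hnd'⟩ := List.nodup_cons.mp hnd
    have hsort' : l.Pairwise (fun e f => w e ≤ w f) := hsort.of_cons
    have hwa : ∀ e ∈ l, w a ≤ w e := fun e he => (List.pairwise_cons.mp hsort).1 e he
    have hb' : ∀ e ∈ l, b ≤ w e := fun e he => hb e (List.mem_cons_of_mem a he)
    have hba : b ≤ w a := hb a List.mem_cons_self
    have hcnt' : ∀ (U : Finset α) (k : ℕ),
        ((a :: l).take (k+1)).countP (fun e => decide (e ∈ U)) =
          (l.take k).countP (fun e => decide (e ∈ U)) + (if a ∈ U then 1 else 0) := by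
      intro U k
      rw [List.take_succ_cons, List.countP_cons]
      simp
    have herase : ∀ (U : Finset α) (k : ℕ),
        (l.take k).countP (fun e => decide (e ∈ U.erase a)) =
          (l.take k).countP (fun e => decide (e ∈ U)) := by
      intro U k
      apply List.countP_congr
      intro e he
      have hea : e ≠ a := fun hc => hal (hc ▸ List.mem_of_mem_take he)
      simp [Finset.mem_erase, hea]
    have hmemS' : ∀ e ∈ S.erase a, e ∈ l := by
      intro e he
      have h1 := Finset.mem_of_mem_erase he
      have h2 := Finset.ne_of_mem_erase he
      rcases List.mem_cons.mp (hS e h1) with hc | hc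
      · exact absurd hc h2
      · exact hc
    have hmemT' : ∀ e ∈ T.erase a, e ∈ l := by
      intro e he
      have h1 := Finset.mem_of_mem_erase he
      have h2 := Finset.ne_of_mem_erase he
      rcases List.mem_cons.mp (hT e h1) with hc | hc
      · exact absurd hc h2
      · exact hc
    by_cases haS : a ∈ S <;> by_cases haT : a ∈ T
    · -- both
      have IH := ih hnd' hsort' (S.erase a) (T.erase a) d b hb' hmemS' hmemT'
        (fun k => by
          have h1 := hcnt (k+1)
          rw [hcnt' S k, hcnt' T k] at h1
          rw [herase S k, herase T k]
          simp only [if_pos haS, if_pos haT] at h1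
          omega)
        (by
          have h1 := Finset.card_pos.mpr ⟨a, haS⟩
          have h2 := Finset.card_pos.mpr ⟨a, haT⟩
          rw [Finset.card_erase_of_mem haS, Finset.card_erase_of_mem haT]; omega)
      have hsS : ∑ e ∈ S, w e = w a + ∑ e ∈ S.erase a, w e := (Finset.add_sum_erase S w haS).symm
      have hsT : ∑ e ∈ T, w e = w a + ∑ e ∈ T.erase a, w e := (Finset.add_sum_erase T w haT).symm
      rw [hsS, hsT]; linarith
    · -- a ∈ S, a ∉ T
      have hTl : ∀ e ∈ T, e ∈ l := fun e he =>
        (List.mem_cons.mp (hT e he)).resolve_left (fun hc => haT (hc ▸ he))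
      have IH := ih hnd' hsort' (S.erase a) T (d+1) (w a) hwa hmemS' hTl
        (fun k => by
          have h1 := hcnt (k+1)
          rw [hcnt' S k, hcnt' T k] at h1
          rw [herase S k]
          simp only [if_pos haS, if_neg haT] at h1
          omega)
        (by
          have h1 := Finset.card_pos.mpr ⟨a, haS⟩
          rw [Finset.card_erase_of_mem haS]; omega)
      have hsS : ∑ e ∈ S, w e = w a + ∑ e ∈ S.erase a, w e := (Finset.add_sum_erase S w haS).symm
      have hdb : (d : ℝ) * b ≤ (d : ℝ) * w a :=
        mul_le_mul_of_nonneg_left hba (Nat.cast_nonneg d)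
      push_cast at IH
      rw [hsS]; linarith
    · -- a ∉ S, a ∈ T
      have hd1 : 1 ≤ d := by
        have h1 := hcnt 1
        rw [(by norm_num : (1:ℕ) = 0 + 1), hcnt' S 0, hcnt' T 0] at h1
        simp only [if_pos haT, if_neg haS, List.take_zero, List.countP_nil] at h1
        omega
      obtain ⟨d', rfl⟩ : ∃ d', d = d' + 1 := ⟨d - 1, by omega⟩
      have hSl : ∀ e ∈ S, e ∈ l := fun e he =>
        (List.mem_cons.mp (hS e he)).resolve_left (fun hc => haS (hc ▸ he))
      have IH := ih hnd' hsort' S (T.erase a) d' b hb' hSl hmemT'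
        (fun k => by
          have h1 := hcnt (k+1)
          rw [hcnt' S k, hcnt' T k] at h1
          rw [herase T k]
          simp only [if_pos haT, if_neg haS] at h1
          omega)
        (by
          have h1 := Finset.card_pos.mpr ⟨a, haT⟩
          rw [Finset.card_erase_of_mem haT]; omega)
      have hsT : ∑ e ∈ T, w e = w a + ∑ e ∈ T.erase a, w e := (Finset.add_sum_erase T w haT).symm
      push_cast
      rw [hsT]; linarith
    · -- neither
      have hSl : ∀ e ∈ S, e ∈ l := fun e he =>
        (List.mem_cons.mp (hS e he)).resolve_left (fun hc => haS (hc ▸ he))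
      have hTl : ∀ e ∈ T, e ∈ l := fun e he =>
        (List.mem_cons.mp (hT e he)).resolve_left (fun hc => haT (hc ▸ he))
      have IH := ih hnd' hsort' S T d b hb' hSl hTl
        (fun k => by
          have h1 := hcnt (k+1)
          rw [hcnt' S k, hcnt' T k] at h1
          simp only [if_neg haS, if_neg haT] at h1
          omega)
        htot
      exact IH

end Abel
section OrderFacts

open Classical

variable {α : Type*}

lemma precUp_trans [LinearOrder α] (c₁ c₂ : α → ℝ) (lam : ℝ) {a b c : α}
    (h1 : precUp c₁ c₂ lam a b) (h2 : precUp c₁ c₂ lam b c) : precUp c₁ c₂ lam a c := by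
  rcases h1 with h1 | ⟨e1, h1⟩
  · rcases h2 with h2 | ⟨e2, h2⟩
    · exact Or.inl (h1.trans h2)
    · exact Or.inl (e2 ▸ h1)
  · rcases h2 with h2 | ⟨e2, h2⟩
    · exact Or.inl (e1 ▸ h2)
    · refine Or.inr ⟨e1.trans e2, ?_⟩
      rcases h1 with h1 | ⟨f1, h1⟩ <;> rcases h2 with h2 | ⟨f2, h2⟩
      · exact Or.inl (h1.trans h2)
      · exact Or.inl (f2 ▸ h1)
      · exact Or.inl (f1 ▸ h2)
      · exact Or.inr ⟨f1.trans f2, h1.trans h2⟩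

lemma precUp_total [LinearOrder α] (c₁ c₂ : α → ℝ) (lam : ℝ) {a b : α} (h : a ≠ b) :
    precUp c₁ c₂ lam a b ∨ precUp c₁ c₂ lam b a := by
  rcases lt_trichotomy (clam c₁ c₂ lam a) (clam c₁ c₂ lam b) with h1 | h1 | h1
  · exact Or.inl (Or.inl h1)
  · rcases lt_trichotomy (c₁ a) (c₁ b) with h2 | h2 | h2
    · exact Or.inl (Or.inr ⟨h1, Or.inl h2⟩)
    · rcases h.lt_or_gt with h3 | h3
      · exact Or.inl (Or.inr ⟨h1, Or.inr ⟨h2, h3⟩⟩)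
      · exact Or.inr (Or.inr ⟨h1.symm, Or.inr ⟨h2.symm, h3⟩⟩)
    · exact Or.inr (Or.inr ⟨h1.symm, Or.inl h2⟩)
  · exact Or.inr (Or.inl h1)

lemma exists_upList [Fintype α] [LinearOrder α] (c₁ c₂ : α → ℝ) (lam : ℝ) :
    ∃ L : List α, IsUpList c₁ c₂ lam Set.univ L := by
  classical
  set r : α → α → Prop := fun a b => precUp c₁ c₂ lam a b ∨ a = b with hr
  haveI : DecidableRel r := fun a b => Classical.propDecidable _
  haveI htot : IsTotal α r := ⟨fun a b => by
    by_cases h : a = b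
    · exact Or.inl (Or.inr h)
    · rcases precUp_total c₁ c₂ lam h with h' | h'
      · exact Or.inl (Or.inl h')
      · exact Or.inr (Or.inl h')⟩
  haveI htr : IsTrans α r := ⟨fun a b c h1 h2 => by
    rcases h1 with h1 | rfl
    · rcases h2 with h2 | rfl
      · exact Or.inl (precUp_trans c₁ c₂ lam h1 h2)
      · exact Or.inl h1
    · exact h2⟩
  set L := List.insertionSort r Finset.univ.toList with hL
  have hperm := List.perm_insertionSort r (Finset.univ.toList (α := α))
  have hnd : L.Nodup := hperm.nodup_iff.mpr Finset.univ.nodup_toList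
  have hsorted : L.Pairwise r := List.pairwise_insertionSort r _
  refine ⟨L, hnd, ?_, ?_⟩
  · intro e
    simp [hL, hperm.mem_iff, Finset.mem_toList]
  · exact (hsorted.and hnd).imp (fun hab => hab.1.resolve_right hab.2)

lemma crossSet_finite [Fintype α] (c₁ c₂ : α → ℝ) : (crossSet c₁ c₂).Finite := by
  have hsub : crossSet c₁ c₂ ⊆
      ⋃ p ∈ (Set.univ : Set (α × α)),
        {t : ℝ | p ∈ Pset c₁ c₂ ∧ clam c₁ c₂ t p.1 = clam c₁ c₂ t p.2} := by
    rintro t ⟨_, p, hp, heq⟩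
    exact Set.mem_biUnion (Set.mem_univ p) ⟨hp, heq⟩
  refine Set.Finite.subset (Set.Finite.biUnion Set.finite_univ fun p _ => ?_) hsub
  by_cases hp : p ∈ Pset c₁ c₂
  · apply Set.Subsingleton.finite
    intro t1 h1 t2 h2
    obtain ⟨hc1, hc2⟩ := hp
    have e1 : t1 * c₁ p.1 + (1 - t1) * c₂ p.1 = t1 * c₁ p.2 + (1 - t1) * c₂ p.2 := h1.2
    have e2 : t2 * c₁ p.1 + (1 - t2) * c₂ p.1 = t2 * c₁ p.2 + (1 - t2) * c₂ p.2 := h2.2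
    have hs : (c₁ p.1 - c₁ p.2) - (c₂ p.1 - c₂ p.2) > 0 := by linarith
    nlinarith [sq_nonneg (t1 - t2)]
  · have : {t : ℝ | p ∈ Pset c₁ c₂ ∧ clam c₁ c₂ t p.1 = clam c₁ c₂ t p.2} = ∅ := by
      ext t; simp [hp]
    rw [this]; exact Set.finite_empty

lemma clam_mono_of_precUp [LinearOrder α] {c₁ c₂ : α → ℝ} {lam mu : ℝ}
    (h0 : 0 ≤ lam) (hlm : lam ≤ mu) (hmu : mu < 1)
    (hmax : ∀ t ∈ crossSet c₁ c₂, t ≤ mu → t ≤ lam)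
    {e f : α} (hef : precUp c₁ c₂ lam e f) : clam c₁ c₂ mu e ≤ clam c₁ c₂ mu f := by
  set Δ₁ := c₁ e - c₁ f with hΔ₁
  set Δ₂ := c₂ e - c₂ f with hΔ₂
  have hgdef : ∀ x : ℝ, clam c₁ c₂ x e - clam c₁ c₂ x f = Δ₂ + x * (Δ₁ - Δ₂) := by
    intro x; simp only [clam, hΔ₁, hΔ₂]; ring
  rcases hef with hlt | ⟨heq, hc⟩
  · -- strict at lam
    by_contra hcon
    push_neg at hcon
    have hglam : Δ₂ + lam * (Δ₁ - Δ₂) < 0 := by rw [← hgdef]; linarith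
    have hgmu : Δ₂ + mu * (Δ₁ - Δ₂) > 0 := by rw [← hgdef]; linarith
    have hlammu : lam < mu := by
      rcases lt_or_eq_of_le hlm with h | h
      · exact h
      · exfalso; rw [h] at hglam; linarith
    have hs : Δ₁ - Δ₂ > 0 := by nlinarith
    set t := -Δ₂ / (Δ₁ - Δ₂) with ht
    have hgt : Δ₂ + t * (Δ₁ - Δ₂) = 0 := by rw [ht, div_mul_cancel₀ _ (ne_of_gt hs)]; ring
    have hlamt : lam < t := by
      rw [ht, lt_div_iff₀ hs]
      nlinarith
    have htmu : t < mu := by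
      rw [ht, div_lt_iff₀ hs]
      nlinarith
    have hΔ₁pos : Δ₁ > 0 := by nlinarith
    have hΔ₂neg : Δ₂ < 0 := by nlinarith
    have htcross : t ∈ crossSet c₁ c₂ := by
      refine ⟨⟨by linarith, by linarith⟩, (e, f), ⟨by simpa [hΔ₁] using hΔ₁pos, by simpa [hΔ₂] using hΔ₂neg⟩, ?_⟩
      have := hgdef t
      show clam c₁ c₂ t e = clam c₁ c₂ t f
      linarith [hgt]
    linarith [hmax t htcross (le_of_lt htmu)]
  · -- tie at lam, c₁-order
    have hglam : Δ₂ + lam * (Δ₁ - Δ₂) = 0 := by rw [← hgdef]; linarith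
    have hΔ₁le : Δ₁ ≤ 0 := by
      rcases hc with h | ⟨h, _⟩
      · linarith
      · linarith
    have : Δ₂ + mu * (Δ₁ - Δ₂) ≤ 0 := by nlinarith
    have := hgdef mu
    linarith

end OrderFacts
section Sep

open Classical Pointwise

lemma sep_lemma {V : Set (ℝ × ℝ)} (hVfin : V.Finite) {y : ℝ × ℝ} (hyV : y ∈ V)
    {l : ℝ} (hl0 : 0 < l) (hl1 : l < 1)
    (hmin : ∀ v ∈ V, l * y.1 + (1 - l) * y.2 ≤ l * v.1 + (1 - l) * v.2)
    (hext : y ∈ Set.extremePoints ℝ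
      (convexHull ℝ V + {p : ℝ × ℝ | 0 ≤ p.1 ∧ 0 ≤ p.2})) :
    ∃ mu : ℝ, 0 < mu ∧ mu < 1 ∧ ∀ v ∈ V,
      mu * y.1 + (1 - mu) * y.2 ≤ mu * v.1 + (1 - mu) * v.2 ∧
      (mu * v.1 + (1 - mu) * v.2 ≤ mu * y.1 + (1 - mu) * y.2 → v = y) := by
  classical
  set A : Set (ℝ × ℝ) := convexHull ℝ V + {p : ℝ × ℝ | 0 ≤ p.1 ∧ 0 ≤ p.2} with hA
  have hmemA : ∀ v ∈ V, v ∈ A := by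
    intro v hv
    have : v + 0 ∈ A := Set.add_mem_add (subset_convexHull ℝ V hv) (by constructor <;> norm_num)
    simpa using this
  set F : Set (ℝ × ℝ) := {v ∈ V | l * v.1 + (1 - l) * v.2 = l * y.1 + (1 - l) * y.2} with hF
  have hyF : y ∈ F := ⟨hyV, rfl⟩
  -- uniqueness on the line
  have hline : ∀ v ∈ F, v.1 = y.1 → v = y := by
    rintro v ⟨_, hv2⟩ h1
    have h2 : v.2 = y.2 := by
      have : (1 - l) * v.2 = (1 - l) * y.2 := by rw [h1] at hv2; linarith
      have hne : (1 - l) ≠ 0 := by linarith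
      exact mul_left_cancel₀ hne this
    exact Prod.ext h1 h2
  -- dichotomy from extremeness
  have hdi : (∀ v ∈ F, y.1 ≤ v.1) ∨ (∀ v ∈ F, v.1 ≤ y.1) := by
    by_contra hcon
    push_neg at hcon
    obtain ⟨⟨u, huF, hu⟩, ⟨v, hvF, hv⟩⟩ := hcon
    have hvu : u.1 < v.1 := hu.trans hv
    set θ := (v.1 - y.1) / (v.1 - u.1) with hθ
    have hvu' : (0:ℝ) < v.1 - u.1 := by linarith
    have h1 : 0 < θ := div_pos (by linarith) hvu'
    have h2 : θ < 1 := (div_lt_one hvu').mpr (by linarith)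
    have hy1 : θ * u.1 + (1 - θ) * v.1 = y.1 := by
      have hθm : θ * (v.1 - u.1) = v.1 - y.1 := by rw [hθ]; exact div_mul_cancel₀ _ (ne_of_gt hvu')
      linarith
    have hy2 : θ * u.2 + (1 - θ) * v.2 = y.2 := by
      have hu2 := huF.2
      have hv2 := hvF.2
      have hkey : (1 - l) * (θ * u.2 + (1 - θ) * v.2) = (1 - l) * y.2 := by
        nlinarith [hu2, hv2, hy1]
      have hne : (1 - l) ≠ 0 := by linarith
      exact mul_left_cancel₀ hne hkey
    have hyseg : y ∈ openSegment ℝ u v := by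
      refine ⟨θ, 1 - θ, h1, by linarith, by ring, ?_⟩
      have : θ • u + (1 - θ) • v = (θ * u.1 + (1 - θ) * v.1, θ * u.2 + (1 - θ) * v.2) := by
        simp [Prod.ext_iff, Prod.smul_def, smul_eq_mul]
      rw [this, hy1, hy2]
    have he1 : u = y := hext.2 (hmemA u huF.1) (hmemA v hvF.1) hyseg
    rw [he1] at hu
    exact lt_irrefl _ hu
  obtain ⟨σ, hσ1, hσF⟩ : ∃ σ : ℝ, (σ = 1 ∨ σ = -1) ∧ ∀ v ∈ F, 0 ≤ σ * (v.1 - y.1) := by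
    rcases hdi with h | h
    · exact ⟨1, Or.inl rfl, fun v hv => by have := h v hv; linarith⟩
    · exact ⟨-1, Or.inr rfl, fun v hv => by have := h v hv; linarith⟩
  have hσabs : |σ| = 1 := by rcases hσ1 with rfl | rfl <;> norm_num
  -- epsilon
  set δ : ℝ × ℝ → ℝ := fun v => (l * v.1 + (1 - l) * v.2) - (l * y.1 + (1 - l) * y.2) with hδ
  set g : ℝ × ℝ → ℝ := fun v => (v.1 - y.1) - (v.2 - y.2) with hg
  set D : Finset (ℝ × ℝ) := hVfin.toFinset.filter (fun v => δ v ≠ 0) with hD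
  have hDmem : ∀ v ∈ D, v ∈ V ∧ 0 < δ v := by
    intro v hv
    obtain ⟨hv1, hv2⟩ := Finset.mem_filter.mp hv
    have hvV : v ∈ V := hVfin.mem_toFinset.mp hv1
    exact ⟨hvV, lt_of_le_of_ne (by have := hmin v hvV; simp only [hδ]; linarith) (Ne.symm hv2)⟩
  set ρ : ℝ := min (min l (1 - l) / 2)
      (if h : D.Nonempty then (D.inf' h fun v => δ v / (|g v| + 1)) / 2 else 1) with hρ
  have hρpos : 0 < ρ := by
    apply lt_min
    · have h2 : 0 < min l (1 - l) := lt_min hl0 (by linarith)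
      linarith
    · split_ifs with h
      · have : 0 < D.inf' h fun v => δ v / (|g v| + 1) := by
          rw [Finset.lt_inf'_iff]
          intro v hv
          exact div_pos (hDmem v hv).2 (by positivity)
        linarith
      · norm_num
  have hρl : ρ < min l (1 - l) := by
    have h1 : ρ ≤ min l (1 - l) / 2 := min_le_left _ _
    have h2 : 0 < min l (1 - l) := lt_min hl0 (by linarith)
    linarith
  have hρD : ∀ v ∈ D, ρ * |g v| < δ v := by
    intro v hv
    have h1 : ρ ≤ (D.inf' ⟨v, hv⟩ fun v => δ v / (|g v| + 1)) / 2 := by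
      have hne : D.Nonempty := ⟨v, hv⟩
      rw [hρ]
      split_ifs with h
      · exact min_le_right _ _
    have h2 : (D.inf' ⟨v, hv⟩ fun v => δ v / (|g v| + 1)) ≤ δ v / (|g v| + 1) :=
      Finset.inf'_le _ hv
    have h3 : 0 < δ v / (|g v| + 1) := div_pos (hDmem v hv).2 (by positivity)
    have h4 : ρ * (|g v| + 1) < δ v := by
      have hρlt : ρ < δ v / (|g v| + 1) := by linarith
      have := (lt_div_iff₀ (by positivity : (0:ℝ) < |g v| + 1)).mp hρlt
      linarith
    nlinarith [abs_nonneg (g v), hρpos]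
  refine ⟨l + σ * ρ, ?_, ?_, ?_⟩
  · rcases hσ1 with rfl | rfl
    · simp only [one_mul]; linarith
    · have := hρl; have h2 := min_le_left l (1 - l); nlinarith
  · rcases hσ1 with rfl | rfl
    · have := hρl; have h2 := min_le_right l (1 - l); nlinarith
    · simp only [neg_one_mul]; linarith
  · intro v hv
    set mu := l + σ * ρ with hmu
    have hkey : (mu * v.1 + (1 - mu) * v.2) - (mu * y.1 + (1 - mu) * y.2)
        = δ v + (σ * ρ) * g v := by
      simp only [hmu, hδ, hg]; ring
    by_cases hvF : δ v = 0
    · -- v ∈ F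
      have hvF' : v ∈ F := ⟨hv, by simp only [hδ] at hvF; linarith⟩
      have hgl : (1 - l) * g v = v.1 - y.1 := by
        have h2 : l * v.1 + (1 - l) * v.2 = l * y.1 + (1 - l) * y.2 := hvF'.2
        simp only [hg]; linarith
      have hσg : 0 ≤ σ * g v := by
        have h0 := hσF v hvF'
        have : σ * ((1 - l) * g v) = σ * (v.1 - y.1) := by rw [hgl]
        nlinarith
      constructor
      · nlinarith
      · intro hle
        have h0 : δ v + (σ * ρ) * g v ≤ 0 := by linarith [hkey]
        have h1 : σ * g v = 0 := by nlinarith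
        have h2 : v.1 = y.1 := by
          rcases hσ1 with rfl | rfl
          · simp only [one_mul] at h1; nlinarith
          · simp only [neg_one_mul, neg_eq_zero] at h1; nlinarith
        exact hline v hvF' h2
    · -- v ∉ F
      have hvD : v ∈ D := Finset.mem_filter.mpr ⟨hVfin.mem_toFinset.mpr hv, hvF⟩
      have h1 : ρ * |g v| < δ v := hρD v hvD
      have h2 : (σ * ρ) * g v ≥ -(ρ * |g v|) := by
        have : |(σ * ρ) * g v| = ρ * |g v| := by
          rw [abs_mul, abs_mul, hσabs, one_mul, abs_of_pos hρpos]
        linarith [neg_abs_le ((σ * ρ) * g v)]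
      constructor
      · nlinarith
      · intro hle
        exfalso
        nlinarith
end Sep
section GreedyMin

open Classical

lemma setCost_eq_sum {α : Type*} (w : α → ℝ) (X : Set α) (hX : X.Finite) :
    setCost w X = ∑ e ∈ hX.toFinset, w e := by
  rw [setCost, ← finsum_mem_coe_finset, hX.coe_toFinset]

lemma greedy_min {α : Type*} [Fintype α] (M : Matroid α) (w : α → ℝ)
    (L : List α) (hN : L.Nodup) (hmem : ∀ e : α, e ∈ L)
    (hsort : L.Pairwise fun e f => w e ≤ w f)
    {B' : Set α} (hB' : M.IsBase B') :
    setCost w (greedy M L) ≤ setCost w B' := by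
  classical
  have hGbase : M.IsBase (greedy M L) := greedy_base M L hmem
  obtain ⟨b, hb⟩ : ∃ b : ℝ, ∀ e ∈ L, b ≤ w e := by
    obtain ⟨b, hb⟩ := (Set.toFinite (w '' {e | e ∈ L})).bddBelow
    exact ⟨b, fun e he => hb ⟨e, he, rfl⟩⟩
  have hGfin : (greedy M L).Finite := Set.toFinite _
  have hBfin : B'.Finite := Set.toFinite _
  rw [setCost_eq_sum w _ hGfin, setCost_eq_sum w _ hBfin]
  have hcoeS : (hGfin.toFinset : Set α) = greedy M L := hGfin.coe_toFinset
  have hcoeT : (hBfin.toFinset : Set α) = B' := hBfin.coe_toFinset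
  have hbr : ∀ (k : ℕ) (U : Finset α),
      (L.take k).countP (fun e => decide (e ∈ U)) = ((U : Set α) ∩ {e | e ∈ L.take k}).ncard := by
    intro k U
    rw [countP_eq_card_inter (hN.sublist (List.take_sublist k L)) U]
    rw [← Set.ncard_coe_finset, Finset.coe_inter, List.coe_toFinset]
    rw [Set.inter_comm]
  have key := abel_key w L hN hsort hGfin.toFinset hBfin.toFinset 0 b hb
    (fun e _ => hmem e) (fun e _ => hmem e)
    (fun k => by
      rw [hbr k, hbr k, hcoeS, hcoeT]
      have := prefix_count M L hN hB'.indep k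
      omega)
    (by
      rw [← Set.ncard_eq_toFinset_card _ hGfin, ← Set.ncard_eq_toFinset_card _ hBfin]
      rw [Nat.add_zero]
      exact hGbase.ncard_eq_ncard_of_isBase hB')
  simpa using key

end GreedyMin
section Main

open Classical

lemma setCost_clam {α : Type*} [Fintype α] (c₁ c₂ : α → ℝ) (mu : ℝ) (B : Set α) :
    setCost (clam c₁ c₂ mu) B = mu * setCost c₁ B + (1 - mu) * setCost c₂ B := by
  classical
  have hB : B.Finite := Set.toFinite B
  rw [setCost_eq_sum _ _ hB, setCost_eq_sum _ _ hB, setCost_eq_sum _ _ hB,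
    Finset.mul_sum, Finset.mul_sum, ← Finset.sum_add_distrib]
  rfl

end Main

/-- Every extreme-supported non-dominated point `y` of the bi-objective
minimum weight basis problem is the image of the greedy basis for the ordering `S^↑_λ`, for
some `λ ∈ 𝓔 ∪ {0}`. -/
theorem esn_point_is_greedy_image
    {α : Type*} [Fintype α] [LinearOrder α] (M : Matroid α) (hE : M.E = Set.univ)
    (c₁ c₂ : α → ℝ) (y : ℝ × ℝ) (hy : ESNBasisPoint M c₁ c₂ y) :
    ∃ lam ∈ insert (0 : ℝ) (crossSet c₁ c₂), ∃ L : List α,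
      IsUpList c₁ c₂ lam Set.univ L ∧ fvec c₁ c₂ (greedy M L) = y := by
  classical
  obtain ⟨⟨B, hSE, hfB⟩, hext⟩ := hy
  obtain ⟨lstar, hlstar, hBbase, hBopt⟩ := hSE
  set V : Set (ℝ × ℝ) := {y' : ℝ × ℝ | ∃ B' : Set α, M.IsBase B' ∧ fvec c₁ c₂ B' = y'} with hV
  have hVfin : V.Finite := by
    have hsub : V ⊆ Set.range (fun B : Set α => fvec c₁ c₂ B) := by
      rintro v ⟨B', _, h⟩; exact ⟨B', h⟩
    exact (Set.finite_range _).subset hsub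
  have hyV : y ∈ V := ⟨B, hBbase, hfB⟩
  have hmin : ∀ v ∈ V, lstar * y.1 + (1 - lstar) * y.2 ≤ lstar * v.1 + (1 - lstar) * v.2 := by
    rintro v ⟨B', hB', rfl⟩
    have h1 := hBopt B' hB'
    rw [setCost_clam, setCost_clam] at h1
    rw [← hfB]
    exact h1
  obtain ⟨mu, hmu0, hmu1, hμ⟩ := sep_lemma hVfin hyV hlstar.1 hlstar.2 hmin hext
  set A : Finset ℝ := insert (0:ℝ) ((crossSet_finite c₁ c₂).toFinset.filter (fun t => t ≤ mu))
    with hAdef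
  have hA0 : (0:ℝ) ∈ A := Finset.mem_insert_self _ _
  have hAne : A.Nonempty := ⟨0, hA0⟩
  set lam0 := A.max' hAne with hlam0
  have hlam0A : lam0 ∈ A := A.max'_mem hAne
  have hmemI : lam0 ∈ insert (0:ℝ) (crossSet c₁ c₂) := by
    rcases Finset.mem_insert.mp hlam0A with h | h
    · rw [h]; exact Set.mem_insert _ _
    · exact Set.mem_insert_of_mem _
        ((crossSet_finite c₁ c₂).mem_toFinset.mp (Finset.mem_filter.mp h).1)
  have h0le : (0:ℝ) ≤ lam0 := A.le_max' 0 hA0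
  have hle_mu : lam0 ≤ mu := by
    apply Finset.max'_le
    intro x hx
    rcases Finset.mem_insert.mp hx with rfl | h
    · exact hmu0.le
    · exact (Finset.mem_filter.mp h).2
  have hmaxE : ∀ t ∈ crossSet c₁ c₂, t ≤ mu → t ≤ lam0 := fun t ht htm =>
    A.le_max' t (Finset.mem_insert_of_mem
      (Finset.mem_filter.mpr ⟨(crossSet_finite c₁ c₂).mem_toFinset.mpr ht, htm⟩))
  obtain ⟨L, hL⟩ := exists_upList c₁ c₂ lam0
  refine ⟨lam0, hmemI, L, hL, ?_⟩
  obtain ⟨hN, hmem', hpw⟩ := hL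
  have hmem : ∀ e : α, e ∈ L := fun e => (hmem' e).mpr (Set.mem_univ e)
  have hsort : L.Pairwise fun e f => clam c₁ c₂ mu e ≤ clam c₁ c₂ mu f :=
    hpw.imp (clam_mono_of_precUp h0le hle_mu hmu1 hmaxE)
  have hGbase : M.IsBase (greedy M L) := greedy_base M L hmem
  have hGopt := greedy_min M (clam c₁ c₂ mu) L hN hmem hsort hBbase
  have hGV : fvec c₁ c₂ (greedy M L) ∈ V := ⟨_, hGbase, rfl⟩
  have h2 := hμ _ hGV
  apply h2.2
  rw [setCost_clam, setCost_clam] at hGopt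
  have hy' : mu * y.1 + (1 - mu) * y.2 = mu * setCost c₁ B + (1 - mu) * setCost c₂ B := by
    rw [← hfB]; rfl
  have hfst : (fvec c₁ c₂ (greedy M L)).1 = setCost c₁ (greedy M L) := rfl
  have hsnd : (fvec c₁ c₂ (greedy M L)).2 = setCost c₂ (greedy M L) := rfl
  rw [hfst, hsnd, hy']
  exact hGopt
end
end

section
/- Every basis B_M(S^↑_λ) for λ ∈ 𝓔 ∪ {0} is an extreme-supported efficient basis, and the set {f(B_M(S^↑_λ)) : λ ∈ 𝓔 ∪ {0}} equals the set of all extreme-supported non-dominated points of the bi-objective minimum weight basis problem on M. -/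
open Set

noncomputable section

section TailoredAuxTop
open Classical
set_option linter.unusedSectionVars false
set_option maxHeartbeats 1000000
namespace TailoredAux


set_option linter.unusedSectionVars false
variable {α : Type*} [DecidableEq α]

/-- threshold count -/
def thr (w : α → ℝ) (s : Finset α) (v : ℝ) : ℕ :=
  (s.filter (fun x => w x ≤ v)).card

lemma thr_le_card (w : α → ℝ) (s : Finset α) (v : ℝ) : thr w s v ≤ s.card :=
  Finset.card_filter_le _ _

lemma thr_eq_card (w : α → ℝ) (s : Finset α) (v : ℝ) (h : ∀ x ∈ s, w x ≤ v) :
    thr w s v = s.card := by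
  unfold thr
  rw [Finset.filter_true_of_mem h]

/-- removing the max of `s` and a max of `t` preserves threshold dominance -/
lemma thr_erase_dom (w : α → ℝ) (s t : Finset α)
    (hcard : s.card = t.card)
    (hdom : ∀ v, thr w t v ≤ thr w s v)
    (s₀ : α) (hs₀ : s₀ ∈ s) (hs₀max : ∀ x ∈ s, w x ≤ w s₀)
    (t₀ : α) (ht₀ : t₀ ∈ t) (ht₀max : ∀ x ∈ t, w x ≤ w t₀) :
    ∀ v, thr w (t.erase t₀) v ≤ thr w (s.erase s₀) v := by
  intro v
  have hst : w s₀ ≤ w t₀ := by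
    -- all of s has weight ≤ w t₀ : dominance at v = w t₀
    have h1 : thr w t (w t₀) = t.card := thr_eq_card _ _ _ ht₀max
    have h2 : t.card ≤ thr w s (w t₀) := h1 ▸ hdom (w t₀)
    have h3 : thr w s (w t₀) = s.card := le_antisymm (thr_le_card _ _ _) (hcard ▸ h2)
    have : s.filter (fun x => w x ≤ w t₀) = s :=
      Finset.eq_of_subset_of_card_le (Finset.filter_subset _ _) h3.ge
    have := Finset.filter_true_of_mem (s := s) (p := fun x => w x ≤ w t₀)
    have hall : ∀ x ∈ s, w x ≤ w t₀ := by
      intro x hx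
      have hx' : x ∈ s.filter (fun y => w y ≤ w t₀) := by rw [‹s.filter _ = s›]; exact hx
      exact (Finset.mem_filter.mp hx').2
    exact hall s₀ hs₀
  have hallS : ∀ x ∈ s, w x ≤ w t₀ := fun x hx => (hs₀max x hx).trans hst
  have card_erase_s : (s.erase s₀).card = s.card - 1 := Finset.card_erase_of_mem hs₀
  rcases le_or_gt (w t₀) v with hv | hv
  · -- both filters are the full erased sets
    have h1 : thr w (t.erase t₀) v = (t.erase t₀).card :=
      thr_eq_card _ _ _ (fun x hx => (ht₀max x (Finset.mem_of_mem_erase hx)).trans hv)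
    have h2 : thr w (s.erase s₀) v = (s.erase s₀).card :=
      thr_eq_card _ _ _ (fun x hx => (hallS x (Finset.mem_of_mem_erase hx)).trans hv)
    rw [h1, h2, Finset.card_erase_of_mem ht₀, Finset.card_erase_of_mem hs₀, hcard]
  · rcases le_or_gt (w s₀) v with hv2 | hv2
    · -- w s₀ ≤ v < w t₀
      have h2 : thr w (s.erase s₀) v = (s.erase s₀).card :=
        thr_eq_card _ _ _ (fun x hx =>
          ((hs₀max x (Finset.mem_of_mem_erase hx)).trans hv2))
      have h1 : (t.erase t₀).filter (fun x => w x ≤ v) ⊆ t.erase t₀ := Finset.filter_subset _ _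
      calc thr w (t.erase t₀) v ≤ (t.erase t₀).card := thr_le_card _ _ _
        _ = (s.erase s₀).card := by
            rw [Finset.card_erase_of_mem ht₀, Finset.card_erase_of_mem hs₀, hcard]
        _ = thr w (s.erase s₀) v := h2.symm
    · -- v < w s₀ : s-filter unchanged by erase
      have h2 : thr w (s.erase s₀) v = thr w s v := by
        unfold thr
        congr 1
        rw [Finset.filter_erase]
        rw [Finset.erase_eq_of_notMem]
        simp only [Finset.mem_filter]
        rintro ⟨-, h⟩
        exact absurd h (not_le.mpr hv2)
      have h1 : thr w (t.erase t₀) v ≤ thr w t v := by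
        unfold thr
        exact Finset.card_le_card (Finset.filter_subset_filter _ (Finset.erase_subset _ _))
      rw [h2]
      exact h1.trans (hdom v)

/-- greedy-type sum comparison from threshold dominance -/
lemma sum_le_of_thr_dom (w : α → ℝ) :
    ∀ n (s t : Finset α), s.card = n → s.card = t.card →
      (∀ v, thr w t v ≤ thr w s v) → ∑ x ∈ s, w x ≤ ∑ x ∈ t, w x := by
  intro n
  induction n with
  | zero =>
    intro s t hs hcard _
    have hs' : s = ∅ := Finset.card_eq_zero.mp hs
    have ht' : t = ∅ := Finset.card_eq_zero.mp (by rw [← hcard, hs])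
    simp [hs', ht']
  | succ n ih =>
    intro s t hs hcard hdom
    have hsne : s.Nonempty := Finset.card_pos.mp (by omega)
    have htne : t.Nonempty := Finset.card_pos.mp (by rw [← hcard]; omega)
    obtain ⟨s₀, hs₀, hs₀max⟩ := s.exists_max_image w hsne
    obtain ⟨t₀, ht₀, ht₀max⟩ := t.exists_max_image w htne
    have hst : w s₀ ≤ w t₀ := by
      have h1 : thr w t (w t₀) = t.card := thr_eq_card _ _ _ ht₀max
      have h2 : t.card ≤ thr w s (w t₀) := h1 ▸ hdom (w t₀)
      have h3 : thr w s (w t₀) = s.card := le_antisymm (thr_le_card _ _ _) (hcard ▸ h2)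
      have h4 : s.filter (fun x => w x ≤ w t₀) = s :=
        Finset.eq_of_subset_of_card_le (Finset.filter_subset _ _) h3.ge
      have hx' : s₀ ∈ s.filter (fun y => w y ≤ w t₀) := by rw [h4]; exact hs₀
      exact (Finset.mem_filter.mp hx').2
    have hdom' := thr_erase_dom w s t hcard hdom s₀ hs₀ hs₀max t₀ ht₀ ht₀max
    have hcard' : (s.erase s₀).card = (t.erase t₀).card := by
      rw [Finset.card_erase_of_mem hs₀, Finset.card_erase_of_mem ht₀, hcard]
    have hsc : (s.erase s₀).card = n := by
      rw [Finset.card_erase_of_mem hs₀, hs]; omega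
    have hrec := ih (s.erase s₀) (t.erase t₀) hsc hcard' hdom'
    have e1 : ∑ x ∈ s, w x = w s₀ + ∑ x ∈ s.erase s₀, w x :=
      (Finset.add_sum_erase s w hs₀).symm
    have e2 : ∑ x ∈ t, w x = w t₀ + ∑ x ∈ t.erase t₀, w x :=
      (Finset.add_sum_erase t w ht₀).symm
    rw [e1, e2]
    exact add_le_add hst hrec

/-- equal sums + dominance ⟹ equal per-value counts -/
lemma count_eq_of_thr_dom (w : α → ℝ) :
    ∀ n (s t : Finset α), s.card = n → s.card = t.card →
      (∀ v, thr w t v ≤ thr w s v) → ∑ x ∈ s, w x = ∑ x ∈ t, w x →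
      ∀ v, (s.filter (fun x => w x = v)).card = (t.filter (fun x => w x = v)).card := by
  intro n
  induction n with
  | zero =>
    intro s t hs hcard _ _ v
    have hs' : s = ∅ := Finset.card_eq_zero.mp hs
    have ht' : t = ∅ := Finset.card_eq_zero.mp (by rw [← hcard, hs])
    simp [hs', ht']
  | succ n ih =>
    intro s t hs hcard hdom hsum v
    have hsne : s.Nonempty := Finset.card_pos.mp (by omega)
    have htne : t.Nonempty := Finset.card_pos.mp (by rw [← hcard]; omega)
    obtain ⟨s₀, hs₀, hs₀max⟩ := s.exists_max_image w hsne
    obtain ⟨t₀, ht₀, ht₀max⟩ := t.exists_max_image w htne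
    have hst : w s₀ ≤ w t₀ := by
      have h1 : thr w t (w t₀) = t.card := thr_eq_card _ _ _ ht₀max
      have h2 : t.card ≤ thr w s (w t₀) := h1 ▸ hdom (w t₀)
      have h3 : thr w s (w t₀) = s.card := le_antisymm (thr_le_card _ _ _) (hcard ▸ h2)
      have h4 : s.filter (fun x => w x ≤ w t₀) = s :=
        Finset.eq_of_subset_of_card_le (Finset.filter_subset _ _) h3.ge
      have hx' : s₀ ∈ s.filter (fun y => w y ≤ w t₀) := by rw [h4]; exact hs₀
      exact (Finset.mem_filter.mp hx').2
    have hdom' := thr_erase_dom w s t hcard hdom s₀ hs₀ hs₀max t₀ ht₀ ht₀max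
    have hcard' : (s.erase s₀).card = (t.erase t₀).card := by
      rw [Finset.card_erase_of_mem hs₀, Finset.card_erase_of_mem ht₀, hcard]
    have hsc : (s.erase s₀).card = n := by
      rw [Finset.card_erase_of_mem hs₀, hs]; omega
    have hrec := sum_le_of_thr_dom w n (s.erase s₀) (t.erase t₀) hsc hcard' hdom'
    have e1 : ∑ x ∈ s, w x = w s₀ + ∑ x ∈ s.erase s₀, w x :=
      (Finset.add_sum_erase s w hs₀).symm
    have e2 : ∑ x ∈ t, w x = w t₀ + ∑ x ∈ t.erase t₀, w x :=
      (Finset.add_sum_erase t w ht₀).symm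
    -- conclude equalities
    have hw : w s₀ = w t₀ := by
      by_contra hne
      have : w s₀ < w t₀ := lt_of_le_of_ne hst hne
      have : ∑ x ∈ s, w x < ∑ x ∈ t, w x := by
        rw [e1, e2]; exact add_lt_add_of_lt_of_le this hrec
      linarith [hsum]
    have hsum' : ∑ x ∈ s.erase s₀, w x = ∑ x ∈ t.erase t₀, w x := by
      rw [e1, e2, hw] at hsum; linarith
    have hcount := ih (s.erase s₀) (t.erase t₀) hsc hcard' hdom' hsum' v
    -- rebuild counts
    have hs' : (s.filter (fun x => w x = v)).card
        = ((s.erase s₀).filter (fun x => w x = v)).card + (if w s₀ = v then 1 else 0) := by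
      rw [Finset.filter_erase]
      by_cases h : w s₀ = v
      · rw [if_pos h]
        have hmem : s₀ ∈ s.filter (fun x => w x = v) := Finset.mem_filter.mpr ⟨hs₀, h⟩
        rw [Finset.card_erase_of_mem hmem]
        have : 1 ≤ (s.filter (fun x => w x = v)).card := Finset.card_pos.mpr ⟨s₀, hmem⟩
        omega
      · rw [if_neg h, Finset.erase_eq_of_notMem, add_zero]
        simp only [Finset.mem_filter]
        rintro ⟨-, h'⟩; exact h h'
    have ht' : (t.filter (fun x => w x = v)).card
        = ((t.erase t₀).filter (fun x => w x = v)).card + (if w t₀ = v then 1 else 0) := by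
      rw [Finset.filter_erase]
      by_cases h : w t₀ = v
      · rw [if_pos h]
        have hmem : t₀ ∈ t.filter (fun x => w x = v) := Finset.mem_filter.mpr ⟨ht₀, h⟩
        rw [Finset.card_erase_of_mem hmem]
        have : 1 ≤ (t.filter (fun x => w x = v)).card := Finset.card_pos.mpr ⟨t₀, hmem⟩
        omega
      · rw [if_neg h, Finset.erase_eq_of_notMem, add_zero]
        simp only [Finset.mem_filter]
        rintro ⟨-, h'⟩; exact h h'
    rw [hs', ht', hcount, hw]



variable {α : Type*} (M : Matroid α)

lemma subset_foldl_greedy (L : List α) : ∀ I : Set α, I ⊆ L.foldl (greedyStep M) I := by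
  induction L with
  | nil => intro I; exact subset_rfl
  | cons a L ih =>
    intro I
    refine subset_trans ?_ (ih (greedyStep M I a))
    unfold greedyStep
    split
    · exact Set.subset_insert _ _
    · exact subset_rfl

lemma foldl_greedy_subset (L : List α) :
    ∀ I : Set α, L.foldl (greedyStep M) I ⊆ I ∪ {x | x ∈ L} := by
  induction L with
  | nil => intro I; simp
  | cons a L ih =>
    intro I
    refine subset_trans (ih (greedyStep M I a)) ?_
    unfold greedyStep
    split
    · intro x hx
      rcases hx with hx | hx
      · rcases hx with rfl | hx
        · exact Or.inr (by simp)
        · exact Or.inl hx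
      · exact Or.inr (show _ ∈ {x : α | x ∈ a :: L} from List.mem_cons_of_mem a hx)
    · intro x hx
      rcases hx with hx | hx
      · exact Or.inl hx
      · exact Or.inr (show _ ∈ {x : α | x ∈ a :: L} from List.mem_cons_of_mem a hx)

lemma foldl_greedy_indep (L : List α) :
    ∀ I : Set α, M.Indep I → M.Indep (L.foldl (greedyStep M) I) := by
  induction L with
  | nil => intro I hI; exact hI
  | cons a L ih =>
    intro I hI
    refine ih _ ?_
    unfold greedyStep
    split
    · assumption
    · exact hI

lemma greedy_indep (L : List α) : M.Indep (greedy M L) :=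
  foldl_greedy_indep M L ∅ M.empty_indep

lemma greedy_subset (L : List α) : greedy M L ⊆ {x | x ∈ L} := by
  have := foldl_greedy_subset M L ∅
  simpa [greedy] using this

/-- rejection lemma -/
lemma greedy_rejected {L s t : List α} {e : α} (hL : L = s ++ e :: t)
    (he : e ∉ greedy M L) :
    ¬ M.Indep (insert e (greedy M s)) ∧ greedy M s ⊆ greedy M L := by
  have hsplit : greedy M L = t.foldl (greedyStep M) (greedyStep M (greedy M s) e) := by
    rw [hL]
    unfold greedy
    rw [List.foldl_append]
    rfl
  by_cases hind : M.Indep (insert e (greedy M s))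
  · exfalso
    have hstep : greedyStep M (greedy M s) e = insert e (greedy M s) := if_pos hind
    have : e ∈ greedy M L := by
      rw [hsplit, hstep]
      exact subset_foldl_greedy M t _ (Set.mem_insert _ _)
    exact he this
  · have hstep : greedyStep M (greedy M s) e = greedy M s := if_neg hind
    constructor
    · exact hind
    · rw [hsplit, hstep]
      exact subset_foldl_greedy M t _

variable [Fintype α]

/-- the greedy set is a base -/
lemma greedy_base (hE : M.E = Set.univ) (L : List α) (hall : ∀ e : α, e ∈ L) :
    M.IsBase (greedy M L) := by
  refine (greedy_indep M L).isBase_of_forall_insert ?_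
  rintro e ⟨-, heB⟩
  obtain ⟨s, t, hst⟩ := List.append_of_mem (hall e)
  exact fun hind =>
    (greedy_rejected M hst heB).1 (hind.subset (Set.insert_subset_insert
      ((greedy_rejected M hst heB).2)))

/-- threshold sets are spanned by the greedy set -/
lemma greedy_basis_thr (hE : M.E = Set.univ) {L : List α} {w : α → ℝ}
    (hall : ∀ e : α, e ∈ L)
    (hsort : L.Pairwise (fun x y => w x ≤ w y)) (v : ℝ) :
    M.IsBasis (greedy M L ∩ {x | w x ≤ v}) {x | w x ≤ v} := by
  refine Matroid.Indep.isBasis_of_forall_insert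
    ((greedy_indep M L).subset Set.inter_subset_left) Set.inter_subset_right ?_
  rintro e ⟨hev, heB⟩
  have heB' : e ∉ greedy M L := fun h => heB ⟨h, hev⟩
  obtain ⟨s, t, hst⟩ := List.append_of_mem (hall e)
  obtain ⟨hnotind, hsub⟩ := greedy_rejected M hst heB'
  have hs_le : ∀ x ∈ greedy M s, w x ≤ w e := by
    intro x hx
    have hxs : x ∈ {y | y ∈ s} := greedy_subset M s hx
    have : ∀ y ∈ s, ∀ z ∈ e :: t, w y ≤ w z := by
      rw [hst] at hsort
      exact fun y hy z hz => (List.pairwise_append.mp hsort).2.2 y hy z hz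
    exact this x hxs e List.mem_cons_self
  have hsub2 : greedy M s ⊆ greedy M L ∩ {x | w x ≤ v} := by
    intro x hx
    exact ⟨hsub hx, le_trans (hs_le x hx) hev⟩
  rw [Matroid.dep_iff]
  constructor
  · intro hind
    exact hnotind (hind.subset (Set.insert_subset_insert hsub2))
  · rw [hE]; exact Set.subset_univ _

/-- cardinality dominance at thresholds -/
lemma greedy_thr_dominance (hE : M.E = Set.univ) {L : List α} {w : α → ℝ}
    (hall : ∀ e : α, e ∈ L)
    (hsort : L.Pairwise (fun x y => w x ≤ w y)) (v : ℝ)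
    {B' : Set α} (hB' : M.Indep B') :
    (B' ∩ {x | w x ≤ v}).encard ≤ (greedy M L ∩ {x | w x ≤ v}).encard := by
  have hXE : {x : α | w x ≤ v} ⊆ M.E := by rw [hE]; exact Set.subset_univ _
  obtain ⟨J, hJ, hsubJ⟩ := (hB'.subset (Set.inter_subset_left)).subset_isBasis_of_subset
    (Set.inter_subset_right (s := B')) hXE
  calc (B' ∩ {x | w x ≤ v}).encard ≤ J.encard := Set.encard_le_encard hsubJ
    _ = (greedy M L ∩ {x | w x ≤ v}).encard :=
        hJ.encard_eq_encard (greedy_basis_thr M hE hall hsort v)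



variable {α : Type*}

lemma pairwise_and {R S : α → α → Prop} : ∀ {l : List α},
    l.Pairwise R → l.Pairwise S → l.Pairwise (fun a b => R a b ∧ S a b) := by
  intro l
  induction l with
  | nil => intro _ _; exact List.Pairwise.nil
  | cons a l ih =>
    intro hR hS
    rcases List.pairwise_cons.mp hR with ⟨hRa, hR'⟩
    rcases List.pairwise_cons.mp hS with ⟨hSa, hS'⟩
    exact List.pairwise_cons.mpr ⟨fun b hb => ⟨hRa b hb, hSa b hb⟩, ih hR' hS'⟩

variable [Fintype α]

/-- The finset of a set. -/
def fs (B : Set α) : Finset α := (Set.toFinite B).toFinset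

@[simp] lemma mem_fs {B : Set α} {x : α} : x ∈ fs B ↔ x ∈ B := Set.Finite.mem_toFinset _

@[simp] lemma coe_fs (B : Set α) : (fs B : Set α) = B := Set.Finite.coe_toFinset _

lemma setCost_eq_sum (c : α → ℝ) (B : Set α) : setCost c B = ∑ x ∈ fs B, c x := by
  rw [setCost, ← finsum_mem_coe_finset, coe_fs]

lemma setCost_comb (c₁ c₂ : α → ℝ) (a b : ℝ) (B : Set α) :
    setCost (fun e => a * c₁ e + b * c₂ e) B = a * setCost c₁ B + b * setCost c₂ B := by
  simp only [setCost_eq_sum, Finset.sum_add_distrib, Finset.mul_sum]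

lemma setCost_congr {c c' : α → ℝ} (h : ∀ e, c e = c' e) (B : Set α) :
    setCost c B = setCost c' B := by
  simp only [setCost_eq_sum]
  exact Finset.sum_congr rfl fun x _ => h x

/-- existence of a list of all elements sorted w.r.t. an embedded linear-order key -/
lemma exists_sorted_list {β : Type*} [LinearOrder β] (κ : α → β) (hκ : Function.Injective κ) :
    ∃ L : List α, L.Nodup ∧ (∀ e : α, e ∈ L) ∧ L.Pairwise (fun x y => κ x < κ y) := by
  let r : α → α → Prop := fun x y => κ x ≤ κ y
  letI : DecidableRel r := fun _ _ => Classical.dec _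
  haveI : IsTrans α r := ⟨fun _ _ _ h1 h2 => le_trans h1 h2⟩
  haveI : IsAntisymm α r := ⟨fun _ _ h1 h2 => hκ (le_antisymm h1 h2)⟩
  haveI : IsTotal α r := ⟨fun x y => le_total _ _⟩
  refine ⟨Finset.univ.sort r, Finset.sort_nodup _ r,
    fun e => (Finset.mem_sort r).mpr (Finset.mem_univ e), ?_⟩
  have h1 : (Finset.univ.sort r).Pairwise r := Finset.pairwise_sort _ r
  have h2 : (Finset.univ.sort r).Pairwise (· ≠ ·) := Finset.sort_nodup _ r
  exact (pairwise_and h1 h2).imp (fun {x y} h => lt_of_le_of_ne h.1 fun he => h.2 (hκ he))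

/-- key for precUp -/
def upKey [LinearOrder α] (c₁ c₂ : α → ℝ) (lam : ℝ) (e : α) : ℝ ×ₗ (ℝ ×ₗ α) :=
  toLex (clam c₁ c₂ lam e, toLex (c₁ e, e))

lemma upKey_inj [LinearOrder α] (c₁ c₂ : α → ℝ) (lam : ℝ) :
    Function.Injective (upKey c₁ c₂ lam) := by
  intro x y h
  unfold upKey at h
  have h1 := congrArg (fun p => (ofLex p).2) h
  have h2 := congrArg (fun p => (ofLex p).2) h1
  exact h2

lemma precUp_iff_upKey [LinearOrder α] (c₁ c₂ : α → ℝ) (lam : ℝ) (x y : α) :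
    precUp c₁ c₂ lam x y ↔ upKey c₁ c₂ lam x < upKey c₁ c₂ lam y := by
  unfold upKey precUp
  rw [Prod.Lex.lt_iff]
  simp only [Prod.Lex.lt_iff, ofLex_toLex]

lemma exists_upList [LinearOrder α] (c₁ c₂ : α → ℝ) (lam : ℝ) :
    ∃ L : List α, L.Nodup ∧ (∀ e : α, e ∈ L ↔ e ∈ (Set.univ : Set α)) ∧
      L.Pairwise (precUp c₁ c₂ lam) := by
  obtain ⟨L, h1, h2, h3⟩ := exists_sorted_list (upKey c₁ c₂ lam) (upKey_inj c₁ c₂ lam)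
  exact ⟨L, h1, fun e => ⟨fun _ => Set.mem_univ e, fun _ => h2 e⟩,
    h3.imp fun {x y} h => (precUp_iff_upKey c₁ c₂ lam x y).mpr h⟩


/-! ### Optimality of the greedy basis -/

variable {M : Matroid α}

lemma thr_eq_encard (w : α → ℝ) (B : Set α) (v : ℝ) :
    (thr w (fs B) v : ℕ∞) = (B ∩ {x | w x ≤ v}).encard := by
  have : B ∩ {x | w x ≤ v} = ↑((fs B).filter (fun x => w x ≤ v)) := by
    ext x; simp [thr]
  rw [this, Set.encard_coe_eq_coe_finsetCard, thr]

lemma fs_card_eq_of_base {B B' : Set α} (hB : M.IsBase B) (hB' : M.IsBase B') :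
    (fs B).card = (fs B').card := by
  have h := hB.encard_eq_encard_of_isBase hB'
  rw [← coe_fs B, ← coe_fs B', Set.encard_coe_eq_coe_finsetCard,
    Set.encard_coe_eq_coe_finsetCard] at h
  exact_mod_cast h

lemma greedy_thr_dom_card (hE : M.E = Set.univ) {L : List α} {w : α → ℝ}
    (hall : ∀ e : α, e ∈ L)
    (hsort : L.Pairwise (fun x y => w x ≤ w y))
    {B' : Set α} (hB' : M.Indep B') (v : ℝ) :
    thr w (fs B') v ≤ thr w (fs (greedy M L)) v := by
  have h := greedy_thr_dominance M hE hall hsort v hB'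
  rw [← thr_eq_encard, ← thr_eq_encard] at h
  exact_mod_cast h

lemma greedy_sum_le (hE : M.E = Set.univ) {L : List α} {w : α → ℝ}
    (hall : ∀ e : α, e ∈ L)
    (hsort : L.Pairwise (fun x y => w x ≤ w y))
    {B' : Set α} (hB' : M.IsBase B') :
    ∑ x ∈ fs (greedy M L), w x ≤ ∑ x ∈ fs B', w x := by
  exact sum_le_of_thr_dom w (fs (greedy M L)).card _ _ rfl
    (fs_card_eq_of_base (greedy_base M hE L hall) hB')
    (fun v => greedy_thr_dom_card hE hall hsort hB'.indep v)

/-- any two optimal bases (w.r.t. a weight `w`) have the same number of elements of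
each weight -/
lemma base_count_eq [LinearOrder α] (hE : M.E = Set.univ) (w : α → ℝ) {B₀ B' : Set α}
    (hB₀ : M.IsBase B₀) (hB' : M.IsBase B')
    (hopt₀ : ∀ B'' : Set α, M.IsBase B'' → ∑ x ∈ fs B₀, w x ≤ ∑ x ∈ fs B'', w x)
    (hopt' : ∀ B'' : Set α, M.IsBase B'' → ∑ x ∈ fs B', w x ≤ ∑ x ∈ fs B'', w x) :
    ∀ v, ((fs B₀).filter (fun x => w x = v)).card
      = ((fs B').filter (fun x => w x = v)).card := by
  -- get a sorted list
  obtain ⟨L, hnd, hall, hsortκ⟩ :=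
    exists_sorted_list (fun e : α => toLex (w e, e)) (fun x y h => by
      have := congrArg (fun p => (ofLex p).2) h; exact this)
  have hsort : L.Pairwise (fun x y => w x ≤ w y) := hsortκ.imp (by
    intro x y h
    rcases Prod.Lex.lt_iff.mp h with h | h
    · exact le_of_lt h
    · exact le_of_eq h.1)
  set G := greedy M L with hG
  have hGbase : M.IsBase G := greedy_base M hE L hall
  have key : ∀ B'' : Set α, M.IsBase B'' →
      (∀ B₂ : Set α, M.IsBase B₂ → ∑ x ∈ fs B'', w x ≤ ∑ x ∈ fs B₂, w x) →
      ∀ v, ((fs B'').filter (fun x => w x = v)).card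
        = ((fs G).filter (fun x => w x = v)).card := by
    intro B'' hB'' hopt v
    have hsum : ∑ x ∈ fs G, w x = ∑ x ∈ fs B'', w x :=
      le_antisymm (greedy_sum_le hE hall hsort hB'') (hopt G hGbase)
    exact (count_eq_of_thr_dom w (fs G).card (fs G) (fs B'') rfl
      (fs_card_eq_of_base hGbase hB'')
      (fun v => greedy_thr_dom_card hE hall hsort hB''.indep v) hsum v).symm
  intro v
  rw [key B₀ hB₀ hopt₀ v, key B' hB' hopt' v]

/-! ### epsilon perturbation machinery -/

variable [LinearOrder α]

lemma precUp_mono {c₁ c₂ : α → ℝ} {lam : ℝ} {x y : α} (h : precUp c₁ c₂ lam x y) :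
    clam c₁ c₂ lam x ≤ clam c₁ c₂ lam y := by
  rcases h with h | ⟨h, -⟩
  · exact h.le
  · exact h.le

lemma exists_eps0 (c₁ c₂ : α → ℝ) (lam : ℝ) :
    ∃ ε₀ : ℝ, 0 < ε₀ ∧ ∀ ε : ℝ, 0 < ε → ε < ε₀ → ∀ x y : α, precUp c₁ c₂ lam x y →
      clam c₁ c₂ lam x + ε * c₁ x ≤ clam c₁ c₂ lam y + ε * c₁ y := by
  set w := clam c₁ c₂ lam with hw
  set P : Finset (α × α) := (Finset.univ ×ˢ Finset.univ).filter
      (fun p => w p.1 < w p.2 ∧ c₁ p.2 < c₁ p.1) with hP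
  have main : ∀ ε₀ : ℝ, (∀ p ∈ P, ε₀ ≤ (w p.2 - w p.1) / (c₁ p.1 - c₁ p.2)) →
      ∀ ε : ℝ, 0 < ε → ε < ε₀ → ∀ x y : α, precUp c₁ c₂ lam x y →
      w x + ε * c₁ x ≤ w y + ε * c₁ y := by
    intro ε₀ hge ε hε hεlt x y hxy
    rcases hxy with h | ⟨h, h'⟩
    · rcases le_or_gt (c₁ x) (c₁ y) with hc | hc
      · have := mul_le_mul_of_nonneg_left hc hε.le
        linarith
      · have hmem : (x, y) ∈ P := by
          rw [hP]
          refine Finset.mem_filter.mpr ⟨Finset.mem_product.mpr ⟨Finset.mem_univ _, Finset.mem_univ _⟩, h, hc⟩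
        have h1 : ε < (w y - w x) / (c₁ x - c₁ y) := lt_of_lt_of_le hεlt (hge _ hmem)
        have h2 : ε * (c₁ x - c₁ y) < w y - w x := by
          rw [← lt_div_iff₀ (by linarith : (0:ℝ) < c₁ x - c₁ y)]
          exact h1
        linarith
    · have hc : c₁ x ≤ c₁ y := by
        rcases h' with h' | ⟨h', -⟩
        · exact h'.le
        · exact h'.le
      have := mul_le_mul_of_nonneg_left hc hε.le
      linarith
  by_cases hPne : P.Nonempty
  · refine ⟨P.inf' hPne (fun p => (w p.2 - w p.1) / (c₁ p.1 - c₁ p.2)), ?_, ?_⟩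
    · rw [Finset.lt_inf'_iff]
      intro p hp
      rw [hP] at hp
      obtain ⟨-, h1, h2⟩ := Finset.mem_filter.mp hp
      exact div_pos (by linarith) (by linarith)
    · exact main _ (fun p hp => Finset.inf'_le _ hp)
  · refine ⟨1, one_pos, main 1 (fun p hp => absurd ⟨p, hp⟩ hPne) ⟩

/-- summary of everything the greedy algorithm guarantees for an up-list -/
lemma greedy_main (M : Matroid α) (hE : M.E = Set.univ) (c₁ c₂ : α → ℝ) {lam : ℝ}
    (hlam0 : 0 ≤ lam) (hlam1 : lam < 1) {L : List α}
    (hnd : L.Nodup) (hmem : ∀ e : α, e ∈ L ↔ e ∈ (Set.univ : Set α))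
    (hpw : L.Pairwise (precUp c₁ c₂ lam)) :
    M.IsBase (greedy M L) ∧
    (∀ B' : Set α, M.IsBase B' →
      setCost (clam c₁ c₂ lam) (greedy M L) ≤ setCost (clam c₁ c₂ lam) B') ∧
    (∀ B' : Set α, M.IsBase B' →
      setCost (clam c₁ c₂ lam) B' = setCost (clam c₁ c₂ lam) (greedy M L) →
        setCost c₁ (greedy M L) ≤ setCost c₁ B') ∧
    (∃ lam' ∈ Set.Ioo (0:ℝ) 1, OptBasis M c₁ c₂ lam' (greedy M L) ∧
       ∀ B' : Set α, M.IsBase B' → fvec c₁ c₂ B' ≠ fvec c₁ c₂ (greedy M L) →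
         setCost (clam c₁ c₂ lam') (greedy M L) < setCost (clam c₁ c₂ lam') B') := by
  have hall : ∀ e : α, e ∈ L := fun e => (hmem e).mpr (Set.mem_univ e)
  set B := greedy M L with hB
  have hBase : M.IsBase B := greedy_base M hE L hall
  -- the weighted-sum costs, at parameter lam and perturbed
  have hsort : L.Pairwise (fun x y => clam c₁ c₂ lam x ≤ clam c₁ c₂ lam y) :=
    hpw.imp (fun h => precUp_mono h)
  have hopt : ∀ B' : Set α, M.IsBase B' →
      setCost (clam c₁ c₂ lam) B ≤ setCost (clam c₁ c₂ lam) B' := by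
    intro B' hB'
    rw [setCost_eq_sum, setCost_eq_sum]
    exact greedy_sum_le hE hall hsort hB'
  obtain ⟨ε₀, hε₀, hkey⟩ := exists_eps0 c₁ c₂ lam
  have hoptε : ∀ ε : ℝ, 0 < ε → ε < ε₀ → ∀ B' : Set α, M.IsBase B' →
      setCost (clam c₁ c₂ lam) B + ε * setCost c₁ B ≤
        setCost (clam c₁ c₂ lam) B' + ε * setCost c₁ B' := by
    intro ε h1 h2 B' hB'
    have hsortε : L.Pairwise (fun x y =>
        clam c₁ c₂ lam x + ε * c₁ x ≤ clam c₁ c₂ lam y + ε * c₁ y) :=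
      hpw.imp (fun h => hkey ε h1 h2 _ _ h)
    have := greedy_sum_le hE hall hsortε hB'
    have e1 : ∀ (B'' : Set α), ∑ x ∈ fs B'', (clam c₁ c₂ lam x + ε * c₁ x)
        = setCost (clam c₁ c₂ lam) B'' + ε * setCost c₁ B'' := by
      intro B''
      rw [setCost_eq_sum, setCost_eq_sum, Finset.sum_add_distrib, Finset.mul_sum]
    rw [e1 B, e1 B'] at this
    exact this
  refine ⟨hBase, hopt, ?_, ?_⟩
  · -- min c₁ among lam-optimal bases
    intro B' hB' heq
    have h := hoptε (ε₀/2) (by linarith) (by linarith) B' hB'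
    rw [heq] at h
    have hpos : (0:ℝ) < ε₀/2 := by linarith
    nlinarith
  · -- the strictly optimal perturbed parameter
    -- the finite set of possible objective vectors
    classical
    set F : Finset (ℝ × ℝ) := (Finset.univ : Finset (Finset α)).image
        (fun s => (∑ x ∈ s, c₁ x, ∑ x ∈ s, c₂ x)) with hF
    have hfvec_mem : ∀ B'' : Set α, fvec c₁ c₂ B'' ∈ F := by
      intro B''
      rw [hF]
      refine Finset.mem_image.mpr ⟨fs B'', Finset.mem_univ _, ?_⟩
      rw [fvec, setCost_eq_sum, setCost_eq_sum]
    set y : ℝ × ℝ := fvec c₁ c₂ B with hy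
    set A : ℝ × ℝ → ℝ := fun z => lam * z.1 + (1 - lam) * z.2 with hA
    set bad : Finset ℝ := F.image
        (fun z => if z.1 = y.1 then -1 else (A y - A z) / (z.1 - y.1)) with hbad
    obtain ⟨ε, hεI, hεbad⟩ :=
      Set.Infinite.exists_notMem_finset (Set.Ioo_infinite hε₀) bad
    obtain ⟨hε1, hε2⟩ := hεI
    set lam' : ℝ := (lam + ε) / (1 + ε) with hlam'
    have hden : (0:ℝ) < 1 + ε := by linarith
    have hlam'0 : 0 < lam' := div_pos (by linarith) hden
    have hlam'1 : lam' < 1 := by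
      rw [div_lt_one hden]; linarith
    -- cost identity
    have hclam' : ∀ (B'' : Set α), setCost (clam c₁ c₂ lam') B''
        = (1/(1+ε)) * (setCost (clam c₁ c₂ lam) B'' + ε * setCost c₁ B'') := by
      intro B''
      have hpt : ∀ e, clam c₁ c₂ lam' e
          = (1/(1+ε)) * clam c₁ c₂ lam e + (ε/(1+ε)) * c₁ e := by
        intro e
        rw [clam, clam, hlam']
        field_simp
        ring
      rw [setCost_congr hpt, setCost_comb]
      ring
    -- cost of a base in terms of A ∘ fvec
    have hAcost : ∀ B'' : Set α, setCost (clam c₁ c₂ lam) B'' = A (fvec c₁ c₂ B'') := by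
      intro B''
      rw [hA, fvec]
      have : ∀ e, clam c₁ c₂ lam e = lam * c₁ e + (1 - lam) * c₂ e := fun e => rfl
      rw [setCost_congr this, setCost_comb]
    have hstrict : ∀ B' : Set α, M.IsBase B' → fvec c₁ c₂ B' ≠ y →
        setCost (clam c₁ c₂ lam) B + ε * setCost c₁ B <
          setCost (clam c₁ c₂ lam) B' + ε * setCost c₁ B' := by
      intro B' hB' hne
      refine lt_of_le_of_ne (hoptε ε hε1 hε2 B' hB') ?_
      intro heq
      set z : ℝ × ℝ := fvec c₁ c₂ B' with hz
      have hyz : A y + ε * y.1 = A z + ε * z.1 := by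
        rw [← hAcost B, ← hAcost B']
        have e2 : setCost c₁ B' = z.1 := rfl
        rw [← e2]
        exact heq
      by_cases hz1 : z.1 = y.1
      · apply hne
        have hAeq : A z = A y := by rw [hz1] at hyz; linarith
        have hz2 : z.2 = y.2 := by
          rw [hA] at hAeq
          simp only at hAeq
          rw [hz1] at hAeq
          have : (1 - lam) * z.2 = (1 - lam) * y.2 := by linarith
          have h1lam : (1:ℝ) - lam ≠ 0 := by linarith
          exact mul_left_cancel₀ h1lam this
        exact Prod.ext hz1 hz2
      · apply hεbad
        rw [hbad]
        refine Finset.mem_image.mpr ⟨z, hfvec_mem B', ?_⟩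
        rw [if_neg hz1]
        have hzne : z.1 - y.1 ≠ 0 := fun h => hz1 (by linarith)
        field_simp
        linarith
    refine ⟨lam', ⟨hlam'0, hlam'1⟩, ⟨hBase, ?_⟩, ?_⟩
    · intro B' hB'
      rw [hclam' B, hclam' B']
      have := hoptε ε hε1 hε2 B' hB'
      have h1 : (0:ℝ) < 1/(1+ε) := by positivity
      nlinarith
    · intro B' hB' hne
      rw [hclam' B, hclam' B']
      have := hstrict B' hB' hne
      have h1 : (0:ℝ) < 1/(1+ε) := by positivity
      nlinarith

/-! ### convex geometry in the plane -/

def ell (lam : ℝ) (p : ℝ × ℝ) : ℝ := lam * p.1 + (1 - lam) * p.2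

lemma ell_add (lam : ℝ) (p q : ℝ × ℝ) : ell lam (p + q) = ell lam p + ell lam q := by
  simp only [ell, Prod.fst_add, Prod.snd_add]; ring

lemma ell_smul (lam a : ℝ) (p : ℝ × ℝ) : ell lam (a • p) = a * ell lam p := by
  simp only [ell, Prod.smul_fst, Prod.smul_snd, smul_eq_mul]; ring

lemma ell_convexHull_min {Y : Set (ℝ × ℝ)} {lam m : ℝ} (h : ∀ z ∈ Y, m ≤ ell lam z) :
    ∀ p ∈ convexHull ℝ Y, m ≤ ell lam p := by
  have hC : Convex ℝ {p : ℝ × ℝ | m ≤ ell lam p} := by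
    intro p hp q hq a b ha hb hab
    simp only [Set.mem_setOf_eq] at *
    rw [ell_add, ell_smul, ell_smul]
    have h1 := mul_le_mul_of_nonneg_left hp ha
    have h2 := mul_le_mul_of_nonneg_left hq hb
    have habm : a * m + b * m = m := by rw [← add_mul, hab, one_mul]
    linarith
  exact fun p hp => convexHull_min h hC hp

lemma ell_convexHull_face {Y : Set (ℝ × ℝ)} {y : ℝ × ℝ} {lam : ℝ}
    (hy : y ∈ Y) (hmin : ∀ z ∈ Y, z ≠ y → ell lam y < ell lam z) :
    ∀ p ∈ convexHull ℝ Y, ell lam p = ell lam y → p = y := by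
  set C : Set (ℝ × ℝ) := {p | ell lam y < ell lam p} ∪ {y} with hCdef
  have hC : Convex ℝ C := by
    intro p hp q hq a b ha hb hab
    rcases eq_or_lt_of_le ha with ha0 | ha0
    · have : a • p + b • q = q := by
        rw [← ha0]
        have hb1 : b = 1 := by linarith
        rw [hb1]
        simp
      rw [this]; exact hq
    rcases eq_or_lt_of_le hb with hb0 | hb0
    · have : a • p + b • q = p := by
        rw [← hb0]
        have ha1 : a = 1 := by linarith
        rw [ha1]
        simp
      rw [this]; exact hp
    have hellp : ell lam y ≤ ell lam p := by
      rcases hp with hp | hp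
      · exact le_of_lt hp
      · rw [Set.mem_singleton_iff] at hp; rw [hp]
    have hellq : ell lam y ≤ ell lam q := by
      rcases hq with hq | hq
      · exact le_of_lt hq
      · rw [Set.mem_singleton_iff] at hq; rw [hq]
    by_cases hpy : p ∈ ({y} : Set (ℝ × ℝ))
    · by_cases hqy : q ∈ ({y} : Set (ℝ × ℝ))
      · rw [Set.mem_singleton_iff] at hpy hqy
        rw [hpy, hqy]
        right
        show a • y + b • y = y
        rw [← add_smul, hab, one_smul]
      · left
        have hq' : ell lam y < ell lam q := by
          rcases hq with hq | hq
          · exact hq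
          · exact absurd hq hqy
        show ell lam y < ell lam (a • p + b • q)
        rw [ell_add, ell_smul, ell_smul]
        have h1 := mul_le_mul_of_nonneg_left hellp ha
        have h2 := mul_lt_mul_of_pos_left hq' hb0
        have habm : a * ell lam y + b * ell lam y = ell lam y := by
          rw [← add_mul, hab, one_mul]
        nlinarith
    · left
      have hp' : ell lam y < ell lam p := by
        rcases hp with hp | hp
        · exact hp
        · exact absurd hp hpy
      show ell lam y < ell lam (a • p + b • q)
      rw [ell_add, ell_smul, ell_smul]
      have h1 := mul_lt_mul_of_pos_left hp' ha0
      have h2 := mul_le_mul_of_nonneg_left hellq hb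
      have habm : a * ell lam y + b * ell lam y = ell lam y := by
        rw [← add_mul, hab, one_mul]
      linarith
  have hYC : Y ⊆ C := by
    intro z hz
    by_cases h : z = y
    · right; exact h
    · left; exact hmin z hz h
  intro p hp hell
  have : p ∈ C := convexHull_min hYC hC hp
  rcases this with h | h
  · exact absurd hell (ne_of_gt h)
  · exact h

open Pointwise in
lemma mem_add_orthant {Y : Set (ℝ × ℝ)} {y : ℝ × ℝ} (hy : y ∈ convexHull ℝ Y) :
    y ∈ convexHull ℝ Y + {p : ℝ × ℝ | 0 ≤ p.1 ∧ 0 ≤ p.2} := by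
  exact Set.mem_add.mpr ⟨y, hy, 0, ⟨le_refl 0, le_refl 0⟩, add_zero y⟩

open Pointwise in
lemma ell_le_on_P {Y : Set (ℝ × ℝ)} {y : ℝ × ℝ} {lam : ℝ}
    (hlam0 : 0 ≤ lam) (hlam1 : lam ≤ 1)
    (hmin : ∀ z ∈ Y, ell lam y ≤ ell lam z) :
    ∀ a ∈ convexHull ℝ Y + {p : ℝ × ℝ | 0 ≤ p.1 ∧ 0 ≤ p.2}, ell lam y ≤ ell lam a := by
  rintro a ⟨p, hp, r, hr, rfl⟩
  have h1 : ell lam y ≤ ell lam p := ell_convexHull_min hmin p hp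
  have h2 : 0 ≤ ell lam r := by
    rw [ell]
    have := hr.1; have := hr.2
    nlinarith
  rw [ell_add]; linarith

open Pointwise in
lemma face_singleton {Y : Set (ℝ × ℝ)} {y : ℝ × ℝ} {lam : ℝ}
    (hlam0 : 0 < lam) (hlam1 : lam < 1) (hy : y ∈ Y)
    (hmin : ∀ z ∈ Y, z ≠ y → ell lam y < ell lam z) :
    ∀ a ∈ convexHull ℝ Y + {p : ℝ × ℝ | 0 ≤ p.1 ∧ 0 ≤ p.2},
      ell lam a = ell lam y → a = y := by
  rintro a ⟨p, hp, r, hr, rfl⟩ hEq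
  have hminle : ∀ z ∈ Y, ell lam y ≤ ell lam z := by
    intro z hz
    by_cases h : z = y
    · rw [h]
    · exact (hmin z hz h).le
  have h1 : ell lam y ≤ ell lam p := ell_convexHull_min hminle p hp
  have h2 : 0 ≤ ell lam r := by
    rw [ell]; have := hr.1; have := hr.2; nlinarith
  rw [ell_add] at hEq
  have hellp : ell lam p = ell lam y := by linarith
  have hellr : ell lam r = 0 := by linarith
  have hr0 : r = 0 := by
    have hr1 : r.1 = 0 := by
      by_contra h
      have : 0 < r.1 := lt_of_le_of_ne hr.1 (Ne.symm h)
      have : 0 < lam * r.1 := mul_pos hlam0 this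
      have : 0 ≤ (1 - lam) * r.2 := mul_nonneg (by linarith) hr.2
      rw [ell] at hellr; linarith
    have hr2 : r.2 = 0 := by
      rw [ell, hr1] at hellr
      have h1lam : (0:ℝ) < 1 - lam := by linarith
      have : (1 - lam) * r.2 = 0 := by linarith
      have := mul_eq_zero.mp this
      rcases this with h | h
      · linarith
      · exact h
    exact Prod.ext hr1 hr2
  have hpy : p = y := ell_convexHull_face hy hmin p hp hellp
  rw [hr0, hpy]
  exact add_zero y

open Pointwise in
lemma extreme_of_unique_min {Y : Set (ℝ × ℝ)} {y : ℝ × ℝ} {lam : ℝ}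
    (hlam0 : 0 < lam) (hlam1 : lam < 1) (hy : y ∈ Y)
    (hmin : ∀ z ∈ Y, z ≠ y → ell lam y < ell lam z) :
    y ∈ Set.extremePoints ℝ (convexHull ℝ Y + {p : ℝ × ℝ | 0 ≤ p.1 ∧ 0 ≤ p.2}) := by
  have hminle : ∀ z ∈ Y, ell lam y ≤ ell lam z := by
    intro z hz
    by_cases h : z = y
    · rw [h]
    · exact (hmin z hz h).le
  rw [mem_extremePoints]
  refine ⟨mem_add_orthant (subset_convexHull ℝ Y hy), ?_⟩
  intro x₁ hx₁ x₂ hx₂ hseg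
  obtain ⟨a, b, ha, hb, hab, hcomb⟩ := hseg
  have h1 : ell lam y ≤ ell lam x₁ := ell_le_on_P hlam0.le hlam1.le hminle x₁ hx₁
  have h2 : ell lam y ≤ ell lam x₂ := ell_le_on_P hlam0.le hlam1.le hminle x₂ hx₂
  have hco : a * ell lam x₁ + b * ell lam x₂ = ell lam y := by
    rw [← hcomb, ell_add, ell_smul, ell_smul]
  have key : ∀ u v : ℝ, ell lam y ≤ u → ell lam y ≤ v →
      a * u + b * v = ell lam y → u = ell lam y ∧ v = ell lam y := by
    intro u v hu hv huv
    have h1 := mul_le_mul_of_nonneg_left hu ha.le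
    have h2 := mul_le_mul_of_nonneg_left hv hb.le
    have habm : a * ell lam y + b * ell lam y = ell lam y := by
      rw [← add_mul, hab, one_mul]
    constructor
    · by_contra hne
      have : ell lam y < u := lt_of_le_of_ne hu (Ne.symm hne)
      have := mul_lt_mul_of_pos_left this ha
      linarith
    · by_contra hne
      have : ell lam y < v := lt_of_le_of_ne hv (Ne.symm hne)
      have := mul_lt_mul_of_pos_left this hb
      linarith
  obtain ⟨he1, he2⟩ := key _ _ h1 h2 hco
  exact ⟨face_singleton hlam0 hlam1 hy hmin x₁ hx₁ he1,
    face_singleton hlam0 hlam1 hy hmin x₂ hx₂ he2⟩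

/-! ### helpers for the converse direction -/

lemma setCost_clam_eq_ell (c₁ c₂ : α → ℝ) (μ : ℝ) (B : Set α) :
    setCost (clam c₁ c₂ μ) B = ell μ (fvec c₁ c₂ B) := by
  rw [ell, fvec]
  have h : ∀ e, clam c₁ c₂ μ e = μ * c₁ e + (1-μ) * c₂ e := fun e => rfl
  rw [setCost_congr h, setCost_comb]

lemma ell_shift (μ lamm : ℝ) (p : ℝ × ℝ) :
    ell μ p = ell lamm p + (μ - lamm) * (p.1 - p.2) := by
  simp only [ell]; ring

lemma exists_slope_witness {Yf : Finset (ℝ × ℝ)} {y : ℝ × ℝ} {lamm : ℝ}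
    (hpos : 0 < lamm) (hle1 : lamm ≤ 1)
    (hminY : ∀ z ∈ Yf, ell lamm y ≤ ell lamm z)
    (hinf : ∀ μ, 0 ≤ μ → μ ≤ 1 → (∀ z ∈ Yf, ell μ y ≤ ell μ z) → lamm ≤ μ) :
    ∃ z ∈ Yf, ell lamm z = ell lamm y ∧ (y.1 - y.2) < (z.1 - z.2) := by
  by_contra hcon
  push_neg at hcon
  set S := Yf.filter (fun z => ell lamm y < ell lamm z) with hS
  set g : ℝ × ℝ → ℝ := fun z => (ell lamm z - ell lamm y) / (|z.1 - z.2 - (y.1 - y.2)| + 1)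
    with hg
  have hδ : ∃ δ : ℝ, 0 < δ ∧ ∀ z ∈ S, δ ≤ g z := by
    by_cases hne : S.Nonempty
    · refine ⟨S.inf' hne g, ?_, fun z hz => Finset.inf'_le g hz⟩
      rw [Finset.lt_inf'_iff]
      intro z hz
      rw [hS] at hz
      obtain ⟨-, h1⟩ := Finset.mem_filter.mp hz
      exact div_pos (by linarith) (by positivity)
    · exact ⟨1, one_pos, fun z hz => absurd ⟨z, hz⟩ hne⟩
  obtain ⟨δ, hδ0, hδle⟩ := hδ
  set μ := max (lamm/2) (lamm - δ/2) with hμ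
  have hμlt : μ < lamm := max_lt (by linarith) (by linarith)
  have hμ0 : 0 ≤ μ := le_trans (by linarith) (le_max_left _ _)
  have hμ1 : μ ≤ 1 := le_trans hμlt.le hle1
  have hμge : lamm - δ/2 ≤ μ := le_max_right _ _
  have hall : ∀ z ∈ Yf, ell μ y ≤ ell μ z := by
    intro z hz
    have hrel : ell μ z - ell μ y
        = (ell lamm z - ell lamm y) + (μ - lamm) * ((z.1 - z.2) - (y.1 - y.2)) := by
      rw [ell_shift μ lamm z, ell_shift μ lamm y]; ring
    rcases eq_or_lt_of_le (hminY z hz) with heq | hlt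
    · have hslope : z.1 - z.2 ≤ y.1 - y.2 := hcon z hz heq.symm
      have hm := mul_nonneg (by linarith : (0:ℝ) ≤ lamm - μ)
        (by linarith : (0:ℝ) ≤ (y.1 - y.2) - (z.1 - z.2))
      have h1 : (0:ℝ) ≤ (μ - lamm) * (z.1 - z.2 - (y.1 - y.2)) := by nlinarith [hm]
      have h2 : ell lamm z - ell lamm y = 0 := by linarith
      linarith
    · have hzS : z ∈ S := by
        rw [hS]; exact Finset.mem_filter.mpr ⟨hz, hlt⟩
      have hgz := hδle z hzS
      set Δ := z.1 - z.2 - (y.1 - y.2) with hΔ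
      set gap := ell lamm z - ell lamm y with hgap
      have hgap0 : 0 < gap := by rw [hgap]; linarith
      have habs : 0 ≤ |Δ| := abs_nonneg Δ
      have hδm : δ * (|Δ| + 1) ≤ gap := by
        rw [hg] at hgz
        have hd : (0:ℝ) < |Δ| + 1 := by linarith
        calc δ * (|Δ| + 1) ≤ (gap / (|Δ| + 1)) * (|Δ| + 1) :=
              mul_le_mul_of_nonneg_right hgz hd.le
          _ = gap := by field_simp
      have h1 : (μ - lamm) * Δ ≥ -((lamm - μ) * |Δ|) := by
        have h2 : Δ ≤ |Δ| := le_abs_self Δ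
        have h3 : 0 ≤ lamm - μ := by linarith
        nlinarith
      have h4 : (lamm - μ) * |Δ| ≤ (δ/2) * |Δ| := by
        apply mul_le_mul_of_nonneg_right _ habs
        linarith
      have h5 : (δ/2) * |Δ| < gap := by nlinarith
      have h6 : ell μ z - ell μ y = gap + (μ - lamm) * Δ := hrel
      linarith
  exact absurd (hinf μ hμ0 hμ1 hall) (not_le.mpr hμlt)

lemma exists_ne_of_sum_ne {s₁ s₂ : Finset α} {d : α → ℝ}
    (hcard : s₁.card = s₂.card) (hsum : ∑ x ∈ s₁, d x ≠ ∑ x ∈ s₂, d x) :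
    ∃ e ∈ s₁, ∃ f ∈ s₂, d e ≠ d f := by
  by_contra h
  push_neg at h
  apply hsum
  rcases Finset.eq_empty_or_nonempty s₂ with h₂ | ⟨f₀, hf₀⟩
  · have h0 : s₁.card = 0 := by rw [hcard, h₂]; rfl
    rw [Finset.card_eq_zero.mp h0, h₂]
  · rcases Finset.eq_empty_or_nonempty s₁ with h₁ | ⟨e₀, he₀⟩
    · exfalso
      have h0 : s₂.card = 0 := by rw [← hcard, h₁]; rfl
      rw [Finset.card_eq_zero.mp h0] at hf₀
      exact absurd hf₀ (Finset.notMem_empty f₀)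
    · have h1 : ∀ e ∈ s₁, d e = d f₀ := fun e he => h e he f₀ hf₀
      have h2 : ∀ f ∈ s₂, d f = d f₀ := by
        intro f hf
        rw [← h e₀ he₀ f hf, h e₀ he₀ f₀ hf₀]
      rw [Finset.sum_congr rfl h1, Finset.sum_congr rfl h2, Finset.sum_const,
        Finset.sum_const, hcard]

lemma exists_bad_fiber {s t : Finset α} (w d : α → ℝ)
    (hsum : ∑ x ∈ s, d x ≠ ∑ x ∈ t, d x) :
    ∃ v : ℝ, ∑ x ∈ s.filter (fun x => w x = v), d x
      ≠ ∑ x ∈ t.filter (fun x => w x = v), d x := by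
  by_contra h
  push_neg at h
  apply hsum
  have hs : ∑ x ∈ s, d x
      = ∑ v ∈ (s ∪ t).image w, ∑ x ∈ s.filter (fun x => w x = v), d x :=
    (Finset.sum_fiberwise_of_maps_to
      (fun x hx => Finset.mem_image_of_mem w (Finset.mem_union_left _ hx)) d).symm
  have ht : ∑ x ∈ t, d x
      = ∑ v ∈ (s ∪ t).image w, ∑ x ∈ t.filter (fun x => w x = v), d x :=
    (Finset.sum_fiberwise_of_maps_to
      (fun x hx => Finset.mem_image_of_mem w (Finset.mem_union_right _ hx)) d).symm
  rw [hs, ht]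
  exact Finset.sum_congr rfl (fun v _ => h v)

end TailoredAux
end TailoredAuxTop

open Pointwise in
/-- Every greedy basis `B_M(S^↑_λ)` for `λ ∈ 𝓔 ∪ {0}` is an
extreme-supported efficient basis, and the set of their images equals the set of all
extreme-supported non-dominated points of the bi-objective minimum weight basis problem. -/
theorem tailored_algorithm_correct
    {α : Type*} [Fintype α] [LinearOrder α] (M : Matroid α) (hE : M.E = Set.univ)
    (c₁ c₂ : α → ℝ) :
    (∀ lam ∈ insert (0 : ℝ) (crossSet c₁ c₂), ∀ L : List α,
      IsUpList c₁ c₂ lam Set.univ L → ESNBasisPoint M c₁ c₂ (fvec c₁ c₂ (greedy M L))) ∧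
    {y : ℝ × ℝ | ∃ lam ∈ insert (0 : ℝ) (crossSet c₁ c₂), ∃ L : List α,
        IsUpList c₁ c₂ lam Set.univ L ∧ y = fvec c₁ c₂ (greedy M L)} =
      {y : ℝ × ℝ | ESNBasisPoint M c₁ c₂ y} := by
  classical
  -- the set of objective values of bases
  have hYfin : Set.Finite {y' : ℝ × ℝ | ∃ B, M.IsBase B ∧ fvec c₁ c₂ B = y'} := by
    have hsub : {y' : ℝ × ℝ | ∃ B, M.IsBase B ∧ fvec c₁ c₂ B = y'}
        ⊆ (fvec c₁ c₂) '' (Set.univ : Set (Set α)) := by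
      rintro z ⟨B, -, rfl⟩; exact ⟨B, Set.mem_univ _, rfl⟩
    exact Set.Finite.subset (Set.Finite.image _ Set.finite_univ) hsub
  -- Part 1 : forward direction, strengthened
  have forward : ∀ lam : ℝ, 0 ≤ lam → lam < 1 → ∀ L : List α,
      IsUpList c₁ c₂ lam Set.univ L →
      M.IsBase (greedy M L) ∧
      ESNBasisPoint M c₁ c₂ (fvec c₁ c₂ (greedy M L)) ∧
      (∀ B' : Set α, M.IsBase B' →
        TailoredAux.ell lam (fvec c₁ c₂ (greedy M L)) ≤ TailoredAux.ell lam (fvec c₁ c₂ B')) ∧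
      (∀ B' : Set α, M.IsBase B' →
        TailoredAux.ell lam (fvec c₁ c₂ B') = TailoredAux.ell lam (fvec c₁ c₂ (greedy M L)) →
        (fvec c₁ c₂ (greedy M L)).1 ≤ (fvec c₁ c₂ B').1) := by
    intro lam h0 h1 L hL
    obtain ⟨hnd, hmem, hpw⟩ := hL
    obtain ⟨hBase, hopt, hc1min, lam', hIoo, hOpt, hstrict⟩ :=
      TailoredAux.greedy_main M hE c₁ c₂ h0 h1 hnd hmem hpw
    refine ⟨hBase, ⟨⟨greedy M L, ⟨lam', hIoo, hOpt⟩, rfl⟩, ?_⟩, ?_, ?_⟩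
    · -- extreme point property
      apply TailoredAux.extreme_of_unique_min (Y := {y' : ℝ × ℝ | ∃ B : Set α,
          M.IsBase B ∧ fvec c₁ c₂ B = y'}) hIoo.1 hIoo.2 ⟨greedy M L, hBase, rfl⟩
      rintro z ⟨B', hB', rfl⟩ hne
      have := hstrict B' hB' hne
      rwa [TailoredAux.setCost_clam_eq_ell, TailoredAux.setCost_clam_eq_ell] at this
    · intro B' hB'
      have := hopt B' hB'
      rwa [TailoredAux.setCost_clam_eq_ell, TailoredAux.setCost_clam_eq_ell] at this
    · intro B' hB' heq
      have hcost : setCost (clam c₁ c₂ lam) B' = setCost (clam c₁ c₂ lam) (greedy M L) := by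
        rw [TailoredAux.setCost_clam_eq_ell, TailoredAux.setCost_clam_eq_ell]; exact heq
      exact hc1min B' hB' hcost
  -- Part 2 : converse direction
  have converse : ∀ y : ℝ × ℝ, ESNBasisPoint M c₁ c₂ y →
      ∃ lam ∈ insert (0 : ℝ) (crossSet c₁ c₂), ∃ L : List α,
        IsUpList c₁ c₂ lam Set.univ L ∧ y = fvec c₁ c₂ (greedy M L) := by
    intro y hy
    obtain ⟨⟨B₀, ⟨lams, hIoos, hOpts⟩, hfB₀⟩, hext⟩ := hy
    have hB₀base : M.IsBase B₀ := hOpts.1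
    have hyY : y ∈ {y' : ℝ × ℝ | ∃ B, M.IsBase B ∧ fvec c₁ c₂ B = y'} := ⟨B₀, hB₀base, hfB₀⟩
    set Y : Set (ℝ × ℝ) := {y' : ℝ × ℝ | ∃ B, M.IsBase B ∧ fvec c₁ c₂ B = y'} with hYdef
    -- the set of minimizing parameters and its infimum
    set Λ : Set ℝ := Set.Icc 0 1 ∩
      ⋂ z ∈ Y, {μ : ℝ | TailoredAux.ell μ y ≤ TailoredAux.ell μ z} with hΛ
    have hclosed : IsClosed Λ := by
      refine IsClosed.inter isClosed_Icc (isClosed_biInter fun z hz => ?_)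
      have hcy : Continuous fun μ : ℝ => TailoredAux.ell μ y := by
        simp only [TailoredAux.ell]; continuity
      have hcz : Continuous fun μ : ℝ => TailoredAux.ell μ z := by
        simp only [TailoredAux.ell]; continuity
      exact isClosed_le hcy hcz
    have hlamsΛ : lams ∈ Λ := by
      refine ⟨⟨hIoos.1.le, hIoos.2.le⟩, Set.mem_iInter₂.mpr ?_⟩
      rintro z ⟨B', hB', rfl⟩
      have := hOpts.2 B' hB'
      rw [TailoredAux.setCost_clam_eq_ell, TailoredAux.setCost_clam_eq_ell, hfB₀] at this
      exact this
    have hbdd : BddBelow Λ := ⟨0, fun μ hμ => hμ.1.1⟩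
    set lamm : ℝ := sInf Λ with hlamm
    have hmemΛ : lamm ∈ Λ := IsClosed.csInf_mem hclosed ⟨lams, hlamsΛ⟩ hbdd
    have hlamm0 : 0 ≤ lamm := hmemΛ.1.1
    have hlammlt : lamm < 1 := lt_of_le_of_lt (csInf_le hbdd hlamsΛ) hIoos.2
    have hminY : ∀ z ∈ Y, TailoredAux.ell lamm y ≤ TailoredAux.ell lamm z := fun z hz =>
      Set.mem_iInter₂.mp hmemΛ.2 z hz
    -- the slope witness in the positive case
    have hz'opt : 0 < lamm → ∃ z' ∈ Y, TailoredAux.ell lamm z' = TailoredAux.ell lamm y ∧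
        y.1 - y.2 < z'.1 - z'.2 := by
      intro hpos
      have hres := TailoredAux.exists_slope_witness (Yf := hYfin.toFinset) hpos hlammlt.le
        (fun z hz => hminY z (hYfin.mem_toFinset.mp hz)) ?_
      · obtain ⟨z', hz', h1, h2⟩ := hres
        exact ⟨z', hYfin.mem_toFinset.mp hz', h1, h2⟩
      · intro μ hμ0 hμ1 hμmin
        exact csInf_le hbdd ⟨⟨hμ0, hμ1⟩, Set.mem_iInter₂.mpr
          (fun z hz => hμmin z (hYfin.mem_toFinset.mpr hz))⟩
    -- y has minimal first coordinate among the minimizers (uses extremeness)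
    have hminc1 : ∀ z ∈ Y, TailoredAux.ell lamm z = TailoredAux.ell lamm y → y.1 ≤ z.1 := by
      intro z hzY hzeq
      by_contra hZlt
      push_neg at hZlt
      have hzP : z ∈ convexHull ℝ Y + {p : ℝ × ℝ | 0 ≤ p.1 ∧ 0 ≤ p.2} :=
        TailoredAux.mem_add_orthant (subset_convexHull ℝ Y hzY)
      have e0 : lamm * z.1 + (1 - lamm) * z.2 = lamm * y.1 + (1 - lamm) * y.2 := hzeq
      rcases eq_or_lt_of_le hlamm0 with h0 | hpos
      · -- lamm = 0 : second coordinates agree, push to the right along the orthant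
        have hz2 : z.2 = y.2 := by
          have h0' : lamm = 0 := h0.symm
          rw [h0'] at e0; linarith
        set b : ℝ × ℝ := y + (y.1 - z.1, 0) with hb
        have hbP : b ∈ convexHull ℝ Y + {p : ℝ × ℝ | 0 ≤ p.1 ∧ 0 ≤ p.2} :=
          Set.mem_add.mpr ⟨y, subset_convexHull ℝ Y hyY, (y.1 - z.1, 0),
            ⟨by simp; linarith, by simp⟩, rfl⟩
        have hseg : y ∈ openSegment ℝ z b := by
          refine ⟨1/2, 1/2, by norm_num, by norm_num, by norm_num, ?_⟩
          have hb1 : b.1 = y.1 + (y.1 - z.1) := rfl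
          have hb2 : b.2 = y.2 + 0 := rfl
          apply Prod.ext
          · show (1/2 : ℝ) * z.1 + (1/2 : ℝ) * b.1 = y.1
            rw [hb1]; ring
          · show (1/2 : ℝ) * z.2 + (1/2 : ℝ) * b.2 = y.2
            rw [hb2, hz2]; ring
        have := (hext.2 hzP hbP hseg)
        rw [this] at hZlt; exact lt_irrefl _ hZlt
      · -- lamm > 0 : use the slope witness on the other side
        obtain ⟨z', hz'Y, hz'eq, hz'slope⟩ := hz'opt hpos
        have e1 : lamm * z'.1 + (1 - lamm) * z'.2 = lamm * y.1 + (1 - lamm) * y.2 := hz'eq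
        have hz'P : z' ∈ convexHull ℝ Y + {p : ℝ × ℝ | 0 ≤ p.1 ∧ 0 ≤ p.2} :=
          TailoredAux.mem_add_orthant (subset_convexHull ℝ Y hz'Y)
        have hy1lt : y.1 < z'.1 := by
          by_contra hle
          push_neg at hle
          have hv : z'.2 - y.2 < z'.1 - y.1 := by linarith
          have hv2 : z'.2 - y.2 < 0 := by linarith
          have h2 : lamm * (z'.1 - y.1) ≤ 0 :=
            mul_nonpos_of_nonneg_of_nonpos hpos.le (by linarith)
          have h3 : (1 - lamm) * (z'.2 - y.2) < 0 :=
            mul_neg_of_pos_of_neg (by linarith) hv2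
          have h4 : lamm * (z'.1 - y.1) + (1 - lamm) * (z'.2 - y.2) = 0 := by linarith
          linarith
        set D : ℝ := z'.1 - z.1 with hD
        have hD0 : 0 < D := by rw [hD]; linarith
        set a : ℝ := (z'.1 - y.1) / D with ha
        set bco : ℝ := (y.1 - z.1) / D with hbco
        have ha0 : 0 < a := div_pos (by linarith) hD0
        have hbco0 : 0 < bco := div_pos (by linarith) hD0
        have hab : a + bco = 1 := by
          rw [ha, hbco, ← add_div, hD]
          rw [div_eq_one_iff_eq (ne_of_gt (by linarith))]; ring
        have hfst : a * z.1 + bco * z'.1 = y.1 := by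
          rw [ha, hbco]
          field_simp
          ring
        have hsnd : a * z.2 + bco * z'.2 = y.2 := by
          have h2 : (1 - lamm) * (a * z.2 + bco * z'.2) = (1 - lamm) * y.2 := by
            linear_combination a * e0 + bco * e1 - lamm * hfst
              + (lamm * y.1 + (1 - lamm) * y.2) * hab
          exact mul_left_cancel₀ (by linarith : (1:ℝ) - lamm ≠ 0) h2
        have hseg : y ∈ openSegment ℝ z z' := by
          refine ⟨a, bco, ha0, hbco0, hab, ?_⟩
          apply Prod.ext
          · show a * z.1 + bco * z'.1 = y.1
            exact hfst
          · show a * z.2 + bco * z'.2 = y.2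
            exact hsnd
        have := (hext.2 hzP hz'P hseg)
        rw [this] at hZlt; exact lt_irrefl _ hZlt
    -- lamm is in the candidate parameter set
    have hlammMem : lamm ∈ insert (0 : ℝ) (crossSet c₁ c₂) := by
      rcases eq_or_lt_of_le hlamm0 with h0 | hpos
      · rw [← h0]; exact Set.mem_insert 0 _
      · refine Set.mem_insert_iff.mpr (Or.inr ?_)
        obtain ⟨z', hz'Y, hz'eq, hz'slope⟩ := hz'opt hpos
        obtain ⟨B', hB', hfvB'⟩ := hz'Y
        set w : α → ℝ := clam c₁ c₂ lamm with hw
        have hopt₀ : ∀ B'' : Set α, M.IsBase B'' →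
            ∑ x ∈ TailoredAux.fs B₀, w x ≤ ∑ x ∈ TailoredAux.fs B'', w x := by
          intro B'' hB''
          rw [← TailoredAux.setCost_eq_sum, ← TailoredAux.setCost_eq_sum,
            TailoredAux.setCost_clam_eq_ell, TailoredAux.setCost_clam_eq_ell, hfB₀]
          exact hminY _ ⟨B'', hB'', rfl⟩
        have hopt' : ∀ B'' : Set α, M.IsBase B'' →
            ∑ x ∈ TailoredAux.fs B', w x ≤ ∑ x ∈ TailoredAux.fs B'', w x := by
          intro B'' hB''
          rw [← TailoredAux.setCost_eq_sum, ← TailoredAux.setCost_eq_sum,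
            TailoredAux.setCost_clam_eq_ell, TailoredAux.setCost_clam_eq_ell, hfvB', hz'eq]
          exact hminY _ ⟨B'', hB'', rfl⟩
        have hcount := TailoredAux.base_count_eq hE w hB₀base hB' hopt₀ hopt'
        set d : α → ℝ := fun x => c₁ x - c₂ x with hd
        have hsum₀ : ∀ B'' : Set α, ∑ x ∈ TailoredAux.fs B'', d x
            = (fvec c₁ c₂ B'').1 - (fvec c₁ c₂ B'').2 := by
          intro B''
          rw [hd, Finset.sum_sub_distrib]
          rw [show (fvec c₁ c₂ B'').1 = setCost c₁ B'' from rfl,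
            show (fvec c₁ c₂ B'').2 = setCost c₂ B'' from rfl,
            TailoredAux.setCost_eq_sum, TailoredAux.setCost_eq_sum]
        have hsum_ne : ∑ x ∈ TailoredAux.fs B₀, d x ≠ ∑ x ∈ TailoredAux.fs B', d x := by
          rw [hsum₀, hsum₀, hfB₀, hfvB']
          intro hEq
          rw [hEq] at hz'slope
          exact lt_irrefl _ hz'slope
        obtain ⟨v, hv⟩ := TailoredAux.exists_bad_fiber w d hsum_ne
        obtain ⟨e, he, f, hf, hdne⟩ := TailoredAux.exists_ne_of_sum_ne (hcount v) hv
        have hwe : w e = v := (Finset.mem_filter.mp he).2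
        have hwf : w f = v := (Finset.mem_filter.mp hf).2
        have hclamef : clam c₁ c₂ lamm e = clam c₁ c₂ lamm f := by
          have h1 : clam c₁ c₂ lamm e = v := hwe
          have h2 : clam c₁ c₂ lamm f = v := hwf
          rw [h1, h2]
        have hce : lamm * c₁ e + (1 - lamm) * c₂ e = lamm * c₁ f + (1 - lamm) * c₂ f := hclamef
        have hc1ne : c₁ e ≠ c₁ f := by
          intro hc1
          apply hdne
          have h3 : (1 - lamm) * c₂ e = (1 - lamm) * c₂ f := by
            rw [hc1] at hce; linarith
          have hc2 : c₂ e = c₂ f := mul_left_cancel₀ (by linarith : (1:ℝ) - lamm ≠ 0) h3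
          show c₁ e - c₂ e = c₁ f - c₂ f
          rw [hc1, hc2]
        rcases lt_or_gt_of_ne hc1ne with hlt | hgt
        · -- c₁ e < c₁ f : the pair (f, e) crosses at lamm
          have hc2 : c₂ f < c₂ e := by
            by_contra hc2le
            push_neg at hc2le
            have hm : (1 - lamm) * c₂ e ≤ (1 - lamm) * c₂ f :=
              mul_le_mul_of_nonneg_left hc2le (by linarith)
            have hm2 : lamm * c₁ e < lamm * c₁ f := by
              exact mul_lt_mul_of_pos_left hlt hpos
            linarith [hce, hm, hm2]
          exact ⟨⟨hpos, hlammlt⟩, (f, e), ⟨hlt, hc2⟩, hclamef.symm⟩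
        · -- c₁ f < c₁ e : the pair (e, f) crosses at lamm
          have hc2 : c₂ e < c₂ f := by
            by_contra hc2le
            push_neg at hc2le
            have hm : (1 - lamm) * c₂ f ≤ (1 - lamm) * c₂ e :=
              mul_le_mul_of_nonneg_left hc2le (by linarith)
            have hm2 : lamm * c₁ f < lamm * c₁ e := by
              exact mul_lt_mul_of_pos_left hgt hpos
            linarith [hce, hm, hm2]
          exact ⟨⟨hpos, hlammlt⟩, (e, f), ⟨hgt, hc2⟩, hclamef⟩
    -- construct the list and conclude
    obtain ⟨L, hnd, hmem, hpw⟩ := TailoredAux.exists_upList c₁ c₂ lamm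
    obtain ⟨hBase, hESN, hellmin, hc1min⟩ := forward lamm hlamm0 hlammlt L ⟨hnd, hmem, hpw⟩
    have hBY : fvec c₁ c₂ (greedy M L) ∈ Y := ⟨greedy M L, hBase, rfl⟩
    have h1 : TailoredAux.ell lamm (fvec c₁ c₂ (greedy M L)) ≤ TailoredAux.ell lamm y := by
      rw [← hfB₀]; exact hellmin B₀ hB₀base
    have h2 : TailoredAux.ell lamm y ≤ TailoredAux.ell lamm (fvec c₁ c₂ (greedy M L)) :=
      hminY _ hBY
    have hee : TailoredAux.ell lamm (fvec c₁ c₂ (greedy M L)) = TailoredAux.ell lamm y :=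
      le_antisymm h1 h2
    have hy1 : y.1 ≤ (fvec c₁ c₂ (greedy M L)).1 := hminc1 _ hBY hee
    have hB1 : (fvec c₁ c₂ (greedy M L)).1 ≤ y.1 := by
      have := hc1min B₀ hB₀base (by rw [hfB₀, hee])
      rw [hfB₀] at this
      exact this
    have h1eq : (fvec c₁ c₂ (greedy M L)).1 = y.1 := le_antisymm hB1 hy1
    have h2eq : (fvec c₁ c₂ (greedy M L)).2 = y.2 := by
      have hee' : lamm * (fvec c₁ c₂ (greedy M L)).1 + (1 - lamm) * (fvec c₁ c₂ (greedy M L)).2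
          = lamm * y.1 + (1 - lamm) * y.2 := hee
      have h3 : (1 - lamm) * (fvec c₁ c₂ (greedy M L)).2 = (1 - lamm) * y.2 := by
        rw [h1eq] at hee'; linarith
      exact mul_left_cancel₀ (by linarith : (1:ℝ) - lamm ≠ 0) h3
    exact ⟨lamm, hlammMem, L, ⟨hnd, hmem, hpw⟩, (Prod.ext h1eq h2eq).symm⟩
  -- assemble the two statements
  constructor
  · intro lam hlam L hL
    have h01 : 0 ≤ lam ∧ lam < 1 := by
      rcases hlam with rfl | hlam
      · exact ⟨le_refl 0, one_pos⟩
      · exact ⟨hlam.1.1.le, hlam.1.2⟩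
    exact (forward lam h01.1 h01.2 L hL).2.1
  · ext y
    simp only [Set.mem_setOf_eq]
    constructor
    · rintro ⟨lam, hlam, L, hL, rfl⟩
      have h01 : 0 ≤ lam ∧ lam < 1 := by
        rcases hlam with rfl | hlam
        · exact ⟨le_refl 0, one_pos⟩
        · exact ⟨hlam.1.1.le, hlam.1.2⟩
      exact (forward lam h01.1 h01.2 L hL).2.1
    · intro hy
      exact converse y hy
end
end
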